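/- arXiv:2201.00109 — 9 statements merged into one kernel-verified Lean document; each statement's English description precedes it below -/
import Mathlib

section
/- For every real number z with 0 ≤ z < 1, the series ∑_{n=0}^∞ 4^n z^{n+1} / ((2n+1)·binom(2n,n)) converges and equals √(z/(1−z)) · arctan(√(z/(1−z))). -/
open Real intervalIntegral MeasureTheory Set
open scoped Nat

private lemma nat_prod_shift (n : ℕ) :
    ∀ k, n ! * ∏ j ∈ Finset.range k, (n + 1 + j) = (n + k)! := by
  intro k
  induction k with
  | zero => simp
  | succ k ih =>
    rw [Finset.prod_range_succ, ← mul_assoc, ih]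
    rw [← Nat.add_assoc, Nat.factorial_succ]
    ring_nf

private lemma beta_nat (n : ℕ) :
    ∫ t in (0:ℝ)..1, (t*(1-t))^n = (n ! : ℝ) * n ! / (2*n+1)! := by
  have h := Complex.betaIntegral_eval_nat_add_one_right (u := (n : ℂ) + 1) (by simp; positivity) n
  rw [Complex.betaIntegral] at h
  simp only [add_sub_cancel_right, Complex.cpow_natCast] at h
  have h2 : ∀ x : ℝ, (x:ℂ)^n * ((1:ℂ)-x)^n = ((x*(1-x))^n : ℝ) := by
    intro x
    rw [← mul_pow]
    norm_cast
  simp only [h2, intervalIntegral.integral_ofReal] at h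
  have hn : n ! * ∏ j ∈ Finset.range (n+1), (n+1+j) = (2*n+1)! := by
    have := nat_prod_shift n (n+1)
    rwa [show n+(n+1)=2*n+1 by ring] at this
  have hp : ∏ j ∈ Finset.range (n+1), ((n:ℂ) + 1 + j)
      = ((∏ j ∈ Finset.range (n+1), (n+1+j) : ℕ) : ℂ) := by
    push_cast; ring_nf
  rw [hp] at h
  have hPne : ((∏ j ∈ Finset.range (n+1), (n+1+j) : ℕ) : ℂ) ≠ 0 := by
    norm_cast
    exact (Finset.prod_pos fun j _ => by omega).ne'
  have hcast : (n ! : ℂ) / ((∏ j ∈ Finset.range (n+1), (n+1+j) : ℕ) : ℂ)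
      = (((n ! : ℝ) * n ! / (2*n+1)! : ℝ) : ℂ) := by
    have h3 : ((2*n+1)! : ℂ) ≠ 0 := by norm_cast; exact (Nat.factorial_pos _).ne'
    rw [Complex.ofReal_div, Complex.ofReal_mul]
    rw [div_eq_div_iff hPne (by exact_mod_cast h3)]
    have := congrArg (fun m : ℕ => (m : ℂ)) hn
    push_cast at this ⊢
    linear_combination (-(n ! : ℂ)) * this
  rw [hcast] at h
  exact_mod_cast h

private lemma arctan_int (w : ℝ) (hw : 0 < w) :
    ∫ t in (0:ℝ)..1, 1/(1+(2*w*(t-1/2))^2) = arctan w / w := by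
  rw [show (fun t : ℝ => 1/(1+(2*w*(t-1/2))^2))
      = fun t : ℝ => (fun s : ℝ => 1/(1+(2*w*s)^2)) (t - 1/2) from rfl,
    intervalIntegral.integral_comp_sub_right (fun s : ℝ => 1/(1+(2*w*s)^2)) (1/2)]
  rw [show (fun s : ℝ => 1/(1+(2*w*s)^2)) = fun s : ℝ => (fun x : ℝ => 1/(1+x^2)) (2*w*s) from rfl,
    intervalIntegral.integral_comp_mul_left (fun x : ℝ => 1/(1+x^2)) (by positivity : (2*w) ≠ 0)]
  rw [show 2*w*((0:ℝ)-1/2) = -w by ring, show 2*w*((1:ℝ)-1/2) = w by ring,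
    integral_one_div_one_add_sq, Real.arctan_neg]
  rw [smul_eq_mul]
  field_simp
  ring

private lemma int_f (z w : ℝ) (hz0 : 0 < z) (hz1 : z < 1) (hw : w = Real.sqrt (z/(1-z))) :
    ∫ t in (0:ℝ)..1, z/(1-4*z*(t*(1-t))) = w * Real.arctan w := by
  have h1z : 0 < 1 - z := by linarith
  have hwpos : 0 < w := by rw [hw]; positivity
  have hw2 : w^2 = z/(1-z) := by rw [hw]; exact Real.sq_sqrt (by positivity)
  have hzw : w^2 * (1-z) = z := by rw [hw2]; field_simp
  have key : ∀ t : ℝ, z/(1-4*z*(t*(1-t))) = w^2 * (1/(1+(2*w*(t-1/2))^2)) := by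
    intro t
    have hden : 1-4*z*(t*(1-t)) = (1-z)*(1+(2*w*(t-1/2))^2) := by
      linear_combination -(4*t^2 - 4*t + 1) * hzw
    rw [hden, hw2]
    have hd2 : (0:ℝ) < 1+(2*w*(t-1/2))^2 := by positivity
    field_simp
  simp_rw [key]
  rw [intervalIntegral.integral_const_mul, arctan_int w hwpos]
  field_simp

/-- Sprugnoli's identity: for `0 ≤ z < 1`,
`∑_{n=0}^∞ 4^n z^(n+1) / ((2n+1)·binom(2n,n))`
converges and equals `√(z/(1-z)) · arctan(√(z/(1-z)))`. -/
theorem sprugnoli_identity (z : ℝ) (hz0 : 0 ≤ z) (hz1 : z < 1) :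
    HasSum (fun n : ℕ =>
      4 ^ n * z ^ (n + 1) / ((2 * (n : ℝ) + 1) * ((2 * n).choose n : ℝ)))
      (Real.sqrt (z / (1 - z)) * Real.arctan (Real.sqrt (z / (1 - z)))) := by
  rcases eq_or_lt_of_le hz0 with hz | hzpos
  · subst hz
    simp only [zero_div, Real.sqrt_zero, Real.arctan_zero, mul_zero]
    have : (fun n : ℕ => 4 ^ n * (0:ℝ) ^ (n + 1) / ((2 * (n : ℝ) + 1) * ((2 * n).choose n : ℝ)))
        = fun _ => 0 := by
      funext n
      simp [zero_pow (Nat.succ_ne_zero n)]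
    rw [this]
    exact hasSum_zero
  -- main case 0 < z
  have h1z : 0 < 1 - z := by linarith
  -- rewrite each term as an integral
  have hterm : ∀ n : ℕ,
      4 ^ n * z ^ (n + 1) / ((2 * (n : ℝ) + 1) * ((2 * n).choose n : ℝ))
        = ∫ t in (0:ℝ)..1, z*(4*z*(t*(1-t)))^n := by
    intro n
    have : ∀ t : ℝ, z*(4*z*(t*(1-t)))^n = z*(4*z)^n * (t*(1-t))^n := by
      intro t; rw [mul_pow]; ring
    simp_rw [this]
    rw [intervalIntegral.integral_const_mul, beta_nat]
    have hC : ((2*n).choose n : ℝ) * n ! * n ! = (2*n)! := by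
      have := Nat.choose_mul_factorial_mul_factorial (Nat.le_mul_of_pos_left n (by norm_num) : n ≤ 2*n)
      rw [show 2*n - n = n by omega] at this
      exact_mod_cast this
    have hfac : ((2*n+1)! : ℝ) = (2*(n:ℝ)+1) * (2*n)! := by
      rw [Nat.factorial_succ]; push_cast; ring
    have hCpos : (0:ℝ) < ((2*n).choose n : ℝ) := by
      exact_mod_cast Nat.choose_pos (Nat.le_mul_of_pos_left n (by norm_num))
    have h2n1 : (0:ℝ) < 2*(n:ℝ)+1 := by positivity
    have hfpos : (0:ℝ) < ((2*n+1)! : ℝ) := by exact_mod_cast Nat.factorial_pos _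
    field_simp
    linear_combination (4^n*z^(n+1))*hfac - (z*(4*z)^n*(2*(n:ℝ)+1))*hC
  have hbig : HasSum (fun n : ℕ => ∫ t in (0:ℝ)..1, z*(4*z*(t*(1-t)))^n)
      (∫ t in (0:ℝ)..1, z/(1-4*z*(t*(1-t)))) := by
    apply intervalIntegral.hasSum_integral_of_dominated_convergence
      (bound := fun (n : ℕ) (_ : ℝ) => z^(n+1))
    · intro n
      exact (Continuous.aestronglyMeasurable (by continuity))
    · intro n
      filter_upwards with t
      intro ht
      rw [Set.uIoc_of_le (by norm_num : (0:ℝ) ≤ 1)] at ht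
      have ht1 : 0 ≤ t*(1-t) := mul_nonneg ht.1.le (by linarith [ht.2])
      have h4 : 4*z*(t*(1-t)) ≤ z := by nlinarith [sq_nonneg (2*t-1)]
      have h40 : 0 ≤ 4*z*(t*(1-t)) := by positivity
      rw [Real.norm_eq_abs, abs_of_nonneg (by positivity)]
      calc z*(4*z*(t*(1-t)))^n ≤ z * z^n :=
            mul_le_mul_of_nonneg_left (pow_le_pow_left₀ h40 h4 n) hz0
        _ = z^(n+1) := by ring
    · filter_upwards with t
      intro _
      exact ((summable_geometric_of_lt_one hz0 hz1).mul_left z).congr fun n => by ring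
    · exact intervalIntegrable_const
    · filter_upwards with t
      intro ht
      rw [Set.uIoc_of_le (by norm_num : (0:ℝ) ≤ 1)] at ht
      have ht1 : 0 ≤ t*(1-t) := mul_nonneg ht.1.le (by linarith [ht.2])
      have h4 : 4*z*(t*(1-t)) ≤ z := by nlinarith [sq_nonneg (2*t-1)]
      have h40 : 0 ≤ 4*z*(t*(1-t)) := by positivity
      have := (hasSum_geometric_of_lt_one h40 (lt_of_le_of_lt h4 hz1)).mul_left z
      simpa [div_eq_mul_inv] using this
  rw [show (fun n : ℕ =>
      4 ^ n * z ^ (n + 1) / ((2 * (n : ℝ) + 1) * ((2 * n).choose n : ℝ)))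
      = fun n : ℕ => ∫ t in (0:ℝ)..1, z*(4*z*(t*(1-t)))^n from funext hterm]
  rw [← int_f z (Real.sqrt (z/(1-z))) hzpos hz1 rfl]
  exact hbig
end

section
/- For every real number z with 0 < z < 1, ∑_{n=0}^∞ 4^n n z^n / ((2n+1)·C_n) = (2z+1)/(4(1−z)^2) + ((4z−1)/(4(1−z)^3)) · arctan(√(z/(1−z))) / √(z/(1−z)). -/
/-!
Put `a n = 4ⁿ / ((2n+1) binom(2n,n))`. Since `(n+1) C_n = binom(2n,n)`, the summand is
`n (n+1) a n zⁿ`. The beta integral `∫₀¹ tⁿ (1-t)ⁿ dt = 1 / ((2n+1) binom(2n,n))` turns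
`∑ a n zⁿ` into `∫₀¹ dt / (1 - 4zt(1-t))`, an arctangent integral whose value is
`arctan b / ((1-z) b)` with `b = √(z/(1-z))`. The recursion `(2n+3) a (n+1) = 2(n+1) a n` gives
two linear relations between `∑ a n zⁿ`, `∑ n a n zⁿ` and `∑ n (n+1) a n zⁿ`, which express the
last one through the first.
-/

open Real intervalIntegral
open scoped Nat

theorem integral_pow_mul_one_sub_pow (m n : ℕ) :
    ∫ t in (0:ℝ)..1, t ^ m * (1 - t) ^ n = (m ! * n ! : ℝ) / (m + n + 1)! := by
  have hB := Complex.betaIntegral_eq_Gamma_mul_div (m + 1) (n + 1)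
    (by simp only [Complex.add_re, Complex.natCast_re, Complex.one_re]; positivity)
    (by simp only [Complex.add_re, Complex.natCast_re, Complex.one_re]; positivity)
  rw [show (m + 1 + (n + 1) : ℂ) = ((m + n + 1 : ℕ) : ℂ) + 1 by push_cast; ring,
    Complex.Gamma_nat_eq_factorial, Complex.Gamma_nat_eq_factorial,
    Complex.Gamma_nat_eq_factorial, Complex.betaIntegral] at hB
  simp only [add_sub_cancel_right, Complex.cpow_natCast] at hB
  apply Complex.ofReal_injective
  rw [← intervalIntegral.integral_ofReal]
  push_cast
  exact hB

theorem integral_pow_mul_one_sub_pow_self (n : ℕ) :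
    ∫ t in (0:ℝ)..1, t ^ n * (1 - t) ^ n = 1 / ((2 * n + 1) * n.centralBinom) := by
  have h : (n.centralBinom * n ! * n ! : ℝ) = (2 * n)! := by
    exact_mod_cast two_mul n ▸ Nat.add_choose_mul_factorial_mul_factorial n n
  rw [integral_pow_mul_one_sub_pow, show n + n + 1 = 2 * n + 1 by ring, Nat.factorial_succ]
  have : (n ! : ℝ) ≠ 0 := by positivity
  push_cast; rw [← h]
  field_simp

-- `∑ arcsinCoeff n x ^ (2 n) = arcsin x / (x √(1 - x²))`
noncomputable def arcsinCoeff (n : ℕ) : ℝ := 4 ^ n / ((2 * n + 1) * n.centralBinom)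

@[simp] theorem arcsinCoeff_zero : arcsinCoeff 0 = 1 := by simp [arcsinCoeff]

theorem arcsinCoeff_nonneg (n : ℕ) : 0 ≤ arcsinCoeff n := by unfold arcsinCoeff; positivity

theorem arcsinCoeff_le_one (n : ℕ) : arcsinCoeff n ≤ 1 := by
  rcases n.eq_zero_or_pos with rfl | hn
  · simp
  have h : (4 ^ n : ℝ) ≤ 2 * n * n.centralBinom := by
    exact_mod_cast Nat.four_pow_le_two_mul_self_mul_centralBinom n hn
  have : (0 : ℝ) < n.centralBinom := by exact_mod_cast n.centralBinom_pos
  rw [arcsinCoeff, div_le_one (by positivity)]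
  nlinarith

theorem arcsinCoeff_succ (n : ℕ) :
    (2 * n + 3) * arcsinCoeff (n + 1) = 2 * (n + 1) * arcsinCoeff n := by
  have h : ((n + 1) * (n + 1).centralBinom : ℝ) = 2 * (2 * n + 1) * n.centralBinom := by
    exact_mod_cast Nat.succ_mul_centralBinom_succ n
  have : (n.centralBinom : ℝ) ≠ 0 := by exact_mod_cast n.centralBinom_ne_zero
  have : ((n + 1).centralBinom : ℝ) ≠ 0 := by exact_mod_cast (n + 1).centralBinom_ne_zero
  simp only [arcsinCoeff]
  push_cast
  field_simp
  linear_combination (-(2 * (2 * n + 3) * 4 ^ n) : ℝ) * h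

theorem four_pow_mul_pow_div_catalan (z : ℝ) (n : ℕ) :
    4 ^ n * (n : ℝ) * z ^ n / ((2 * n + 1) * catalan n)
      = n * (n + 1) * arcsinCoeff n * z ^ n := by
  have h : ((n + 1) * catalan n : ℝ) = n.centralBinom := by
    exact_mod_cast succ_mul_catalan_eq_centralBinom n
  have : (catalan n : ℝ) ≠ 0 :=
    right_ne_zero_of_mul (h ▸ Nat.cast_ne_zero.mpr n.centralBinom_ne_zero)
  rw [arcsinCoeff, ← h]
  field_simp

theorem integral_four_mul_mul_one_sub_pow (z : ℝ) (n : ℕ) :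
    ∫ t in (0:ℝ)..1, (4 * z * t * (1 - t)) ^ n = arcsinCoeff n * z ^ n := by
  simp_rw [show ∀ t : ℝ, (4 * z * t * (1 - t)) ^ n = (4 ^ n * z ^ n) * (t ^ n * (1 - t) ^ n) by
    intro t; rw [← mul_pow, ← mul_pow, ← mul_pow]; ring_nf]
  rw [integral_const_mul, integral_pow_mul_one_sub_pow_self, arcsinCoeff]
  ring

theorem hasSum_integral_four_mul_mul_one_sub_pow {z : ℝ} (hz0 : 0 ≤ z) (hz1 : z < 1) :
    HasSum (fun n : ℕ => ∫ t in (0:ℝ)..1, (4 * z * t * (1 - t)) ^ n)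
      (∫ t in (0:ℝ)..1, (1 - 4 * z * t * (1 - t))⁻¹) := by
  have hrange : ∀ t ∈ Set.uIoc (0:ℝ) 1, 0 ≤ 4 * z * t * (1 - t) ∧ 4 * z * t * (1 - t) ≤ z := by
    rintro t ⟨h0, h1⟩
    simp only [zero_le_one, min_eq_left, max_eq_right] at h0 h1
    exact ⟨by have := mul_nonneg h0.le (sub_nonneg.mpr h1); positivity,
      by nlinarith [mul_nonneg hz0 (sq_nonneg (2 * t - 1))]⟩
  refine hasSum_integral_of_dominated_convergence (fun n _ => z ^ n)
    (fun n => (by fun_prop : Continuous _).aestronglyMeasurable)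
    (fun n => Filter.Eventually.of_forall fun t ht => ?_)
    (Filter.Eventually.of_forall fun t _ => summable_geometric_of_lt_one hz0 hz1)
    intervalIntegrable_const
    (Filter.Eventually.of_forall fun t ht => ?_)
  · rw [norm_pow, Real.norm_of_nonneg (hrange t ht).1]
    exact pow_le_pow_left₀ (hrange t ht).1 (hrange t ht).2 n
  · exact hasSum_geometric_of_lt_one (hrange t ht).1 ((hrange t ht).2.trans_lt hz1)

theorem integral_inv_one_sub_four_mul_mul_one_sub {z : ℝ} (hz0 : 0 < z) (hz1 : z < 1) :
    ∫ t in (0:ℝ)..1, (1 - 4 * z * t * (1 - t))⁻¹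
      = arctan (√(z / (1 - z))) / ((1 - z) * √(z / (1 - z))) := by
  set b := √(z / (1 - z))
  have h1z : 0 < 1 - z := by linarith
  have hb : 0 < b := Real.sqrt_pos.mpr (by positivity)
  have hb2 : (1 - z) * b ^ 2 = z := by
    rw [Real.sq_sqrt (by positivity)]; field_simp
  -- `(1 - z) (1 + b² (2t - 1)²) = 1 - 4 z t (1 - t)`, so the integrand is a rescaled `arctan'`.
  have hderiv : ∀ t ∈ Set.uIcc (0:ℝ) 1,
      HasDerivAt (fun t => arctan (b * (2 * t - 1)) / ((1 - z) * (b * 2)))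
        (1 - 4 * z * t * (1 - t))⁻¹ t := by
    intro t _
    have hlin : HasDerivAt (fun t : ℝ => b * (2 * t - 1)) (b * 2) t := by
      simpa using (((hasDerivAt_id t).const_mul 2).sub_const 1).const_mul b
    refine (((hasDerivAt_arctan _).comp t hlin).div_const _).congr_deriv ?_
    rw [show 1 - 4 * z * t * (1 - t) = (1 - z) * (1 + (b * (2 * t - 1)) ^ 2) by
      linear_combination (-(2 * t - 1) ^ 2) * hb2]
    field_simp
  have hcont : ContinuousOn (fun t : ℝ => (1 - 4 * z * t * (1 - t))⁻¹) (Set.uIcc 0 1) :=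
    ContinuousOn.inv₀ (by fun_prop) fun t _ => by
      nlinarith [mul_nonneg hz0.le (sq_nonneg (2 * t - 1))]
  rw [integral_eq_sub_of_hasDerivAt hderiv hcont.intervalIntegrable]
  simp only [mul_one, mul_zero, zero_sub, mul_neg, arctan_neg]
  norm_num
  field_simp
  ring

theorem hasSum_arcsinCoeff_mul_pow {z : ℝ} (hz0 : 0 < z) (hz1 : z < 1) :
    HasSum (fun n : ℕ => arcsinCoeff n * z ^ n)
      (arctan (√(z / (1 - z))) / ((1 - z) * √(z / (1 - z)))) := by
  rw [← integral_inv_one_sub_four_mul_mul_one_sub hz0 hz1]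
  exact (hasSum_integral_four_mul_mul_one_sub_pow hz0.le hz1).congr_fun fun n =>
    (integral_four_mul_mul_one_sub_pow z n).symm

theorem summable_pow_mul_arcsinCoeff (k : ℕ) {z : ℝ} (hz : ‖z‖ < 1) :
    Summable fun n : ℕ => (n : ℝ) ^ k * arcsinCoeff n * z ^ n := by
  refine (summable_pow_mul_geometric_of_norm_lt_one k (norm_norm z ▸ hz)).of_norm_bounded
    fun n => ?_
  rw [norm_mul, norm_mul, norm_pow, norm_pow, Real.norm_of_nonneg (arcsinCoeff_nonneg n),
    Real.norm_natCast]
  have := arcsinCoeff_le_one n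
  gcongr
  exact mul_le_of_le_one_right (by positivity) this

theorem hasSum_two_mul_add_one_mul_arcsinCoeff (w : ℕ → ℝ) {z s : ℝ}
    (h : HasSum (fun n : ℕ => w (n + 1) * (2 * (n + 1)) * arcsinCoeff n * z ^ (n + 1)) s) :
    HasSum (fun n : ℕ => w n * (2 * n + 1) * arcsinCoeff n * z ^ n) (w 0 + s) := by
  have h' : HasSum (fun n : ℕ =>
      w (n + 1) * (2 * ((n + 1 : ℕ) : ℝ) + 1) * arcsinCoeff (n + 1) * z ^ (n + 1)) s :=
    h.congr_fun fun n => by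
      push_cast
      linear_combination w (n + 1) * z ^ (n + 1) * arcsinCoeff_succ n
  have := HasSum.zero_add (f := fun n : ℕ => w n * (2 * n + 1) * arcsinCoeff n * z ^ n) h'
  simpa only [Nat.cast_zero, mul_zero, zero_add, mul_one, arcsinCoeff_zero, pow_zero] using this

theorem hasSum_mul_succ_mul_arcsinCoeff {z : ℝ} (hz : ‖z‖ < 1) :
    HasSum (fun n : ℕ => n * (n + 1) * arcsinCoeff n * z ^ n)
      ((2 * z + 1 + (4 * z - 1) * ∑' n : ℕ, arcsinCoeff n * z ^ n) / (4 * (1 - z) ^ 2)) := by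
  have hS := (by simpa using summable_pow_mul_arcsinCoeff 0 hz :
    Summable fun n : ℕ => arcsinCoeff n * z ^ n).hasSum
  have hT := (by simpa using summable_pow_mul_arcsinCoeff 1 hz :
    Summable fun n : ℕ => n * arcsinCoeff n * z ^ n).hasSum
  have hV := (((summable_pow_mul_arcsinCoeff 2 hz).add (summable_pow_mul_arcsinCoeff 1 hz)).congr
    fun n => by ring : Summable fun n : ℕ => n * (n + 1) * arcsinCoeff n * z ^ n).hasSum
  set S := ∑' n : ℕ, arcsinCoeff n * z ^ n
  set T := ∑' n : ℕ, n * arcsinCoeff n * z ^ n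
  set V := ∑' n : ℕ, n * (n + 1) * arcsinCoeff n * z ^ n
  have eq1 : 2 * T + S = 1 + 2 * z * (T + S) :=
    ((hT.mul_left 2).add hS).unique <|
      (hasSum_two_mul_add_one_mul_arcsinCoeff (fun _ => 1)
        (((hT.add hS).mul_left (2 * z)).congr_fun fun n => by ring)).congr_fun fun n => by ring
  have eq2 : 2 * V - T = 2 * z * (V + T + S) := by
    have := hasSum_two_mul_add_one_mul_arcsinCoeff (fun n => n)
      ((((hV.add hT).add hS).mul_left (2 * z)).congr_fun fun n => by push_cast; ring)
    rw [Nat.cast_zero, zero_add] at this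
    exact ((hV.mul_left 2).sub hT).unique <| this.congr_fun fun n => by ring
  have hz1 : 1 - z ≠ 0 := by linarith [(Real.le_norm_self z).trans_lt hz]
  convert hV using 1
  field_simp
  linear_combination (-(2 * (1 - z))) * eq2 - (2 * z + 1) * eq1

/-- For `0 < z < 1`,
`∑_{n=0}^∞ 4^n n z^n / ((2n+1)·C_n)
  = (2z+1)/(4(1-z)^2) + ((4z-1)/(4(1-z)^3)) · arctan(√(z/(1-z))) / √(z/(1-z))`. -/
theorem g_one_closed_form (z : ℝ) (hz0 : 0 < z) (hz1 : z < 1) :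
    ∑' n : ℕ, 4 ^ n * (n : ℝ) * z ^ n / ((2 * (n : ℝ) + 1) * (catalan n : ℝ))
      = (2 * z + 1) / (4 * (1 - z) ^ 2)
        + (4 * z - 1) / (4 * (1 - z) ^ 3)
          * (Real.arctan (Real.sqrt (z / (1 - z))) / Real.sqrt (z / (1 - z))) := by
  have hV := hasSum_mul_succ_mul_arcsinCoeff (show ‖z‖ < 1 by rwa [norm_of_nonneg hz0.le])
  rw [(hasSum_arcsinCoeff_mul_pow hz0 hz1).tsum_eq] at hV
  simp_rw [four_pow_mul_pow_div_catalan, hV.tsum_eq]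
  have h1z : 1 - z ≠ 0 := by linarith
  have hb : √(z / (1 - z)) ≠ 0 := (Real.sqrt_pos.mpr (div_pos hz0 (by linarith))).ne'
  field_simp
end

section
/- For every real number z with 0 < |z| < π/2, ∑_{n=0}^∞ 4^n (sin z)^{2n} / ((2n+1)·C_n) = (1/(2·cos^2 z))·(1 + 2z/sin(2z)). -/
open Real

namespace GTrig


noncomputable def c (n : ℕ) : ℝ := 4 ^ n / ((2 * n + 1) * (Nat.centralBinom n))

lemma cb_pos (n : ℕ) : (0:ℝ) < Nat.centralBinom n := by
  exact_mod_cast Nat.centralBinom_pos n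

lemma c_pos (n : ℕ) : 0 < c n := by
  unfold c
  have := cb_pos n
  positivity

lemma nat_four_pow_le (n : ℕ) : 4 ^ n ≤ (2 * n + 1) * Nat.centralBinom n := by
  induction n with
  | zero => simp
  | succ n ih =>
    have h := Nat.succ_mul_centralBinom_succ n
    have hcb := Nat.centralBinom_pos (n + 1)
    calc 4 ^ (n + 1) = 4 * 4 ^ n := by ring
    _ ≤ 4 * ((2 * n + 1) * Nat.centralBinom n) := by omega
    _ = 2 * ((n + 1) * Nat.centralBinom (n + 1)) := by rw [h]; ring
    _ ≤ (2 * (n + 1) + 1) * Nat.centralBinom (n + 1) := by nlinarith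

lemma c_le_one (n : ℕ) : c n ≤ 1 := by
  unfold c
  rw [div_le_one (by have := cb_pos n; positivity)]
  exact_mod_cast nat_four_pow_le n

lemma c_rec (n : ℕ) : (2 * (n:ℝ) + 3) * c (n + 1) = (2 * n + 2) * c n := by
  have h : ((n:ℝ) + 1) * Nat.centralBinom (n + 1) = 2 * (2 * n + 1) * Nat.centralBinom n := by
    exact_mod_cast Nat.succ_mul_centralBinom_succ n
  have hb : (Nat.centralBinom n : ℝ) ≠ 0 := (cb_pos n).ne'
  have hb1 : (Nat.centralBinom (n+1) : ℝ) ≠ 0 := (cb_pos (n+1)).ne'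
  unfold c
  push_cast
  field_simp
  linear_combination (-(2*(2*(n:ℝ)+3)) * 4^n) * h



lemma summable_aux {y : ℝ} (hy : |y| < 1) {f : ℕ → ℝ}
    (hf : ∀ n, |f n| ≤ (2 * n + 3) * |y| ^ (2 * n)) : Summable f := by
  have hy2 : ‖y ^ 2‖ < 1 := by
    rw [Real.norm_eq_abs, abs_pow]
    nlinarith [abs_nonneg y]
  have s1 : Summable (fun n : ℕ => ((n:ℝ) ^ 1) * (y ^ 2) ^ n) :=
    summable_pow_mul_geometric_of_norm_lt_one 1 hy2
  have s2 : Summable (fun n : ℕ => (y ^ 2) ^ n) :=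
    summable_geometric_of_norm_lt_one hy2
  have s3 : Summable (fun n : ℕ => (2 * (n:ℝ) + 3) * |y| ^ (2 * n)) := by
    have : (fun n : ℕ => (2 * (n:ℝ) + 3) * |y| ^ (2 * n))
        = fun n : ℕ => 2 * (((n:ℝ) ^ 1) * (y ^ 2) ^ n) + 3 * (y ^ 2) ^ n := by
      funext n
      rw [pow_mul, sq_abs]
      ring
    rw [this]
    exact ((s1.mul_left 2).add (s2.mul_left 3))
  exact Summable.of_norm_bounded s3 (fun n => by simpa using hf n)

lemma term_bound {y : ℝ} (hy : |y| < 1) (n : ℕ) :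
    |(2 * (n:ℝ) + 1) * c n * y ^ (2 * n)| ≤ (2 * n + 3) * |y| ^ (2 * n) := by
  rw [abs_mul, abs_mul, abs_pow]
  have h1 : |(2 * (n:ℝ) + 1)| = 2 * n + 1 := abs_of_pos (by positivity)
  have h2 : |c n| = c n := abs_of_pos (c_pos n)
  rw [h1, h2]
  have h3 : (0:ℝ) ≤ |y| ^ (2 * n) := by positivity
  have h4 : (2 * (n:ℝ) + 1) * c n ≤ 2 * n + 3 := by nlinarith [c_pos n, c_le_one n]
  exact mul_le_mul_of_nonneg_right h4 h3

lemma summable_S' {y : ℝ} (hy : |y| < 1) :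
    Summable (fun n : ℕ => (2 * (n:ℝ) + 1) * c n * y ^ (2 * n)) :=
  summable_aux hy (term_bound hy)

lemma summable_A {y : ℝ} (hy : |y| < 1) :
    Summable (fun n : ℕ => c n * y ^ (2 * n + 1)) := by
  apply summable_aux hy
  intro n
  rw [abs_mul, abs_pow, abs_of_pos (c_pos n), pow_succ]
  have h1 : c n * (|y| ^ (2*n) * |y|) ≤ 1 * (|y| ^ (2*n) * 1) := by
    apply mul_le_mul (c_le_one n) ?_ (by positivity) zero_le_one
    exact mul_le_mul_of_nonneg_left hy.le (by positivity)
  nlinarith [pow_nonneg (abs_nonneg y) (2*n)]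

lemma summable_even {y : ℝ} (hy : |y| < 1) :
    Summable (fun n : ℕ => c n * y ^ (2 * n)) := by
  apply summable_aux hy
  intro n
  rw [abs_mul, abs_pow, abs_of_pos (c_pos n)]
  have := c_le_one n
  nlinarith [pow_nonneg (abs_nonneg y) (2*n), c_pos n]

lemma A_hasDeriv {x : ℝ} (hx : |x| < 1) :
    HasDerivAt (fun y : ℝ => ∑' n : ℕ, c n * y ^ (2 * n + 1))
      (∑' n : ℕ, (2 * (n:ℝ) + 1) * c n * x ^ (2 * n)) x := by
  set r : ℝ := (|x| + 1) / 2 with hrdef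
  have hr0 : 0 < r := by positivity
  have hxr : |x| < r := by simp only [hrdef]; linarith
  have hr1 : r < 1 := by simp only [hrdef]; linarith
  have hrabs : |r| < 1 := by rw [abs_of_pos hr0]; exact hr1
  apply hasDerivAt_tsum_of_isPreconnected
    (u := fun n : ℕ => (2 * (n:ℝ) + 3) * r ^ (2 * n))
    (g' := fun n y => (2 * (n:ℝ) + 1) * c n * y ^ (2 * n))
    (t := Metric.ball (0:ℝ) r) (y₀ := 0)
  · apply summable_aux hrabs
    intro n
    rw [abs_of_nonneg (by positivity), abs_of_pos hr0]
  · exact Metric.isOpen_ball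
  · exact (convex_ball (0:ℝ) r).isPreconnected
  · intro n y hy
    have h := (hasDerivAt_pow (2 * n + 1) y).const_mul (c n)
    refine h.congr_deriv (Eq.symm ?_)
    push_cast [Nat.add_sub_cancel]
    ring
  · intro n y hy
    rw [Metric.mem_ball, Real.dist_eq, sub_zero] at hy
    rw [Real.norm_eq_abs]
    calc |(2 * (n:ℝ) + 1) * c n * y ^ (2 * n)| ≤ (2 * n + 3) * |y| ^ (2 * n) :=
          term_bound (lt_trans hy hr1) n
    _ ≤ (2 * n + 3) * r ^ (2 * n) := by
        apply mul_le_mul_of_nonneg_left ?_ (by positivity)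
        exact pow_le_pow_left₀ (abs_nonneg y) hy.le _
  · rw [Metric.mem_ball, Real.dist_eq, sub_zero, abs_zero]; exact hr0
  · have : (fun n : ℕ => c n * (0:ℝ) ^ (2 * n + 1)) = fun _ => (0:ℝ) := by
      funext n; simp
    rw [this]; exact summable_zero
  · rw [Metric.mem_ball, Real.dist_eq, sub_zero]; exact hxr



lemma ode {y : ℝ} (hy : |y| < 1) :
    (1 - y ^ 2) * (∑' n : ℕ, (2 * (n:ℝ) + 1) * c n * y ^ (2 * n))
      - y * (∑' n : ℕ, c n * y ^ (2 * n + 1)) = 1 := by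
  set H : ℕ → ℝ := fun n => (2 * (n:ℝ) + 1) * c n * y ^ (2 * n) with hHdef
  have hH : Summable H := summable_S' hy
  have hA : Summable (fun n : ℕ => c n * y ^ (2 * n + 1)) := summable_A hy
  have hstep : ∀ n : ℕ, y ^ 2 * H n + y * (c n * y ^ (2 * n + 1)) = H (n + 1) := by
    intro n
    have hrec := c_rec n
    simp only [hHdef]
    push_cast
    linear_combination (-(y ^ (2 * n) * y ^ 2)) * hrec
  have h1 : y ^ 2 * (∑' n, H n) + y * (∑' n : ℕ, c n * y ^ (2 * n + 1))
      = ∑' n : ℕ, H (n + 1) := by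
    rw [← tsum_mul_left, ← tsum_mul_left,
      ← Summable.tsum_add (hH.mul_left (y ^ 2)) (hA.mul_left y)]
    exact tsum_congr hstep
  have h2 : ∑' n, H n = H 0 + ∑' n : ℕ, H (n + 1) := Summable.tsum_eq_zero_add hH
  have h3 : H 0 = 1 := by
    simp [hHdef, c, Nat.centralBinom_zero]
  linarith [h1, h2, h3]

lemma sqrt_mul_A_eq {x : ℝ} (hx : |x| < 1) :
    Real.sqrt (1 - x ^ 2) * (∑' n : ℕ, c n * x ^ (2 * n + 1)) = Real.arcsin x := by
  set F : ℝ → ℝ := fun y =>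
    Real.sqrt (1 - y ^ 2) * (∑' n : ℕ, c n * y ^ (2 * n + 1)) - Real.arcsin y with hF
  have hderiv : ∀ y ∈ Metric.ball (0:ℝ) 1, HasDerivAt F 0 y := by
    intro y hy
    rw [Metric.mem_ball, Real.dist_eq, sub_zero] at hy
    have hy' := abs_lt.1 hy
    have hy2 : (0:ℝ) < 1 - y ^ 2 := by nlinarith
    have hsqpos : 0 < Real.sqrt (1 - y ^ 2) := Real.sqrt_pos.2 hy2
    have hsq2 : Real.sqrt (1 - y ^ 2) ^ 2 = 1 - y ^ 2 := Real.sq_sqrt hy2.le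
    have hpoly : HasDerivAt (fun t : ℝ => 1 - t ^ 2) (-(2 * y)) y := by
      simpa using ((hasDerivAt_pow 2 y).const_sub 1)
    have hsqrt : HasDerivAt (fun t : ℝ => Real.sqrt (1 - t ^ 2))
        (-(2 * y) / (2 * Real.sqrt (1 - y ^ 2))) y := hpoly.sqrt hy2.ne'
    have hA := A_hasDeriv hy
    have harc := Real.hasDerivAt_arcsin (ne_of_gt hy'.1) (ne_of_lt hy'.2)
    have hcomb := (hsqrt.mul hA).sub harc
    refine hcomb.congr_deriv (Eq.symm ?_)
    have hode := ode hy
    set S' := (∑' n : ℕ, (2 * (n:ℝ) + 1) * c n * y ^ (2 * n)) with hS'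
    set A := (∑' n : ℕ, c n * y ^ (2 * n + 1)) with hA'
    rw [eq_comm]
    field_simp
    linear_combination hode + S' * hsq2
  have h0mem : (0:ℝ) ∈ Metric.ball (0:ℝ) 1 := by simp
  have hxmem : x ∈ Metric.ball (0:ℝ) 1 := by
    simpa [Metric.mem_ball, Real.dist_eq] using hx
  have hc : F x = F 0 := by
    apply (convex_ball (0:ℝ) 1).is_const_of_fderivWithin_eq_zero
      (fun y hy => (hderiv y hy).differentiableAt.differentiableWithinAt) ?_ hxmem h0mem
    intro y hy
    rw [fderivWithin_of_isOpen Metric.isOpen_ball hy]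
    have := (hderiv y hy).hasFDerivAt.fderiv
    rw [this]
    ext t
    simp
  have hF0 : F 0 = 0 := by
    have hz : (fun n : ℕ => c n * (0:ℝ) ^ (2 * n + 1)) = fun _ => (0:ℝ) := by
      funext n; simp
    simp [hF, hz, tsum_zero]
  have := hc.trans hF0
  simp only [hF] at this
  linarith [this]


end GTrig

open GTrig in
/-- For `0 < |z| < π/2`,
`∑_{n=0}^∞ 4^n (sin z)^(2n) / ((2n+1)·C_n) = (1/(2 cos² z))·(1 + 2z/sin(2z))`. -/
theorem g_trig_zero (z : ℝ) (hz0 : 0 < |z|) (hz1 : |z| < Real.pi / 2) :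
    ∑' n : ℕ, 4 ^ n * Real.sin z ^ (2 * n) / ((2 * (n : ℝ) + 1) * (catalan n : ℝ))
      = 1 / (2 * Real.cos z ^ 2) * (1 + 2 * z / Real.sin (2 * z)) := by
  obtain ⟨hzl, hzr⟩ := abs_lt.1 hz1
  have hπ := Real.pi_pos
  have hcos : 0 < Real.cos z := Real.cos_pos_of_mem_Ioo ⟨hzl, hzr⟩
  have hzne : z ≠ 0 := by
    intro h; rw [h] at hz0; simp at hz0
  have hsin0 : Real.sin z ≠ 0 := by
    intro h
    exact hzne ((Real.sin_eq_zero_iff_of_lt_of_lt (by linarith) (by linarith)).1 h)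
  set x := Real.sin z with hxdef
  have hpyth := Real.sin_sq_add_cos_sq z
  have hx1 : |x| < 1 := by
    rw [abs_lt]; constructor <;> nlinarith
  have hx1' := abs_lt.1 hx1
  have hsqrt : Real.sqrt (1 - x ^ 2) = Real.cos z := by
    rw [show (1:ℝ) - x ^ 2 = Real.cos z ^ 2 by nlinarith]
    exact Real.sqrt_sq hcos.le
  have harcsin : Real.arcsin x = z := Real.arcsin_sin (by linarith) (by linarith)
  -- value of the odd series
  have hAval : (∑' n : ℕ, c n * x ^ (2 * n + 1)) = z / Real.cos z := by
    have h := sqrt_mul_A_eq hx1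
    rw [hsqrt, harcsin] at h
    field_simp
    linarith [h]
  -- value of the derivative series
  have hS'val : (∑' n : ℕ, (2 * (n:ℝ) + 1) * c n * x ^ (2 * n))
      = 1 / Real.cos z ^ 2 + z * x / Real.cos z ^ 3 := by
    have hy2 : (0:ℝ) < 1 - x ^ 2 := by nlinarith
    have hsqpos : 0 < Real.sqrt (1 - x ^ 2) := Real.sqrt_pos.2 hy2
    have hpoly : HasDerivAt (fun t : ℝ => 1 - t ^ 2) (-(2 * x)) x := by
      simpa using ((hasDerivAt_pow 2 x).const_sub 1)
    have hsqrtD : HasDerivAt (fun t : ℝ => Real.sqrt (1 - t ^ 2))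
        (-(2 * x) / (2 * Real.sqrt (1 - x ^ 2))) x := hpoly.sqrt hy2.ne'
    have hinv : HasDerivAt (fun t : ℝ => (Real.sqrt (1 - t ^ 2))⁻¹)
        (-(-(2 * x) / (2 * Real.sqrt (1 - x ^ 2))) / (Real.sqrt (1 - x ^ 2)) ^ 2) x :=
      hsqrtD.inv hsqpos.ne'
    have harc := Real.hasDerivAt_arcsin (ne_of_gt hx1'.1) (ne_of_lt hx1'.2)
    have hG := harc.mul hinv
    have hxmem : x ∈ Metric.ball (0:ℝ) 1 := by
      simpa [Metric.mem_ball, Real.dist_eq] using hx1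
    have hEv : (fun y : ℝ => Real.arcsin y * (Real.sqrt (1 - y ^ 2))⁻¹)
        =ᶠ[nhds x] (fun y : ℝ => ∑' n : ℕ, c n * y ^ (2 * n + 1)) := by
      filter_upwards [Metric.isOpen_ball.mem_nhds hxmem] with y hy
      rw [Metric.mem_ball, Real.dist_eq, sub_zero] at hy
      have hy' := abs_lt.1 hy
      have h1 := sqrt_mul_A_eq hy
      have h2 : (0:ℝ) < Real.sqrt (1 - y ^ 2) := Real.sqrt_pos.2 (by nlinarith)
      field_simp
      linarith [h1]
    have hA2 : HasDerivAt (fun y : ℝ => Real.arcsin y * (Real.sqrt (1 - y ^ 2))⁻¹)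
        (∑' n : ℕ, (2 * (n:ℝ) + 1) * c n * x ^ (2 * n)) x :=
      (A_hasDeriv hx1).congr_of_eventuallyEq hEv
    have huniq := hA2.unique hG
    rw [huniq, hsqrt, harcsin]
    field_simp
  -- value of the even series
  have hEval : (∑' n : ℕ, c n * x ^ (2 * n)) = z / (x * Real.cos z) := by
    have hmul : x * (∑' n : ℕ, c n * x ^ (2 * n)) = ∑' n : ℕ, c n * x ^ (2 * n + 1) := by
      rw [← tsum_mul_left]
      exact tsum_congr fun n => by ring
    rw [hAval] at hmul
    rw [eq_div_iff (by positivity : x * Real.cos z ≠ 0)]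
    field_simp at hmul ⊢
    linarith [hmul]
  -- termwise identity
  have hterm : ∀ n : ℕ, 4 ^ n * x ^ (2 * n) / ((2 * (n : ℝ) + 1) * (catalan n : ℝ))
      = (1/2) * ((2 * (n:ℝ) + 1) * c n * x ^ (2 * n) + c n * x ^ (2 * n)) := by
    intro n
    have hcat : ((n:ℝ) + 1) * (catalan n : ℝ) = Nat.centralBinom n := by
      exact_mod_cast succ_mul_catalan_eq_centralBinom n
    have hcb := cb_pos n
    have hcatpos : (0:ℝ) < (catalan n : ℝ) := by
      rcases Nat.eq_zero_or_pos (catalan n) with h | h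
      · exfalso; rw [h] at hcat; simp at hcat; linarith [cb_pos n, hcat]
      · exact_mod_cast h
    rw [show (1/2) * ((2 * (n:ℝ) + 1) * c n * x ^ (2 * n) + c n * x ^ (2 * n))
        = ((n:ℝ) + 1) * c n * x ^ (2 * n) by ring]
    unfold GTrig.c
    rw [← hcat]
    field_simp
  rw [tsum_congr hterm, tsum_mul_left,
    Summable.tsum_add (summable_S' hx1) (summable_even hx1), hS'val, hEval, Real.sin_two_mul]
  rw [← hxdef]
  have hpyth' : x ^ 2 + Real.cos z ^ 2 = 1 := by rw [hxdef]; exact hpyth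
  field_simp
  linear_combination z * hpyth'
end

section
/- For every real number z with |z| < 1, ∑_{n=0}^∞ 4^n z^n / ((2n+1)·C_n) = (1/2)·∫_{−1}^1 dx/(1 − z(1−x^2))^2 and ∑_{n=0}^∞ 4^n n z^n / ((2n+1)·C_n) = z·∫_{−1}^1 (1−x^2)/(1 − z(1−x^2))^3 dx. -/
open Finset MeasureTheory intervalIntegral Real

private lemma cat_prod (n : ℕ) :
    ((2 * (n : ℝ) + 1) * (catalan n : ℝ)) *
      (((n : ℝ) + 1) * ∏ i ∈ Finset.range n, (2 * (i : ℝ) + 2) / (2 * (i : ℝ) + 3))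
      = 4 ^ n := by
  induction n with
  | zero => simp
  | succ k ih =>
    have hc : ((k : ℝ) + 2) * (catalan (k + 1) : ℝ) = 2 * (2 * k + 1) * (catalan k : ℝ) := by
      have h1 : ((k : ℕ) + 1 + 1) * catalan (k + 1) = (k + 1).centralBinom :=
        succ_mul_catalan_eq_centralBinom (k + 1)
      have h2 : ((k : ℕ) + 1) * (k + 1).centralBinom = 2 * (2 * k + 1) * k.centralBinom :=
        Nat.succ_mul_centralBinom_succ k
      have h3 : ((k : ℕ) + 1) * catalan k = k.centralBinom := succ_mul_catalan_eq_centralBinom k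
      have h4 : ((k : ℕ) + 1) * (((k : ℕ) + 1 + 1) * catalan (k + 1))
          = 2 * (2 * k + 1) * ((k + 1) * catalan k) := by
        rw [h1, h3]; exact h2
      have h5 : ((k : ℝ) + 1) * (((k : ℝ) + 2) * (catalan (k + 1) : ℝ))
          = 2 * (2 * k + 1) * (((k : ℝ) + 1) * (catalan k : ℝ)) := by
        exact_mod_cast congrArg (fun m : ℕ => (m : ℝ)) h4
      have hk1 : ((k : ℝ) + 1) ≠ 0 := by positivity
      have := mul_left_cancel₀ hk1 (by linarith [h5] :
        ((k : ℝ) + 1) * (((k : ℝ) + 2) * (catalan (k + 1) : ℝ))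
          = ((k : ℝ) + 1) * (2 * (2 * k + 1) * (catalan k : ℝ)))
      linarith [this]
    rw [Finset.prod_range_succ]
    push_cast
    have hd : (2 * (k : ℝ) + 3) * ((2 * (k : ℝ) + 2) / (2 * (k : ℝ) + 3)) = 2 * (k : ℝ) + 2 := by
      have hk3 : (2 * (k : ℝ) + 3) ≠ 0 := by positivity
      field_simp
    set P := ∏ i ∈ Finset.range k, (2 * (i : ℝ) + 2) / (2 * (i : ℝ) + 3) with hP
    calc (2 * ((k : ℝ) + 1) + 1) * (catalan (k + 1) : ℝ)
          * (((k : ℝ) + 1 + 1) * (P * ((2 * (k : ℝ) + 2) / (2 * (k : ℝ) + 3))))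
        = (((k : ℝ) + 2) * (catalan (k + 1) : ℝ))
            * (P * ((2 * (k : ℝ) + 3) * ((2 * (k : ℝ) + 2) / (2 * (k : ℝ) + 3)))) := by ring
      _ = (2 * (2 * (k : ℝ) + 1) * (catalan k : ℝ)) * (P * (2 * (k : ℝ) + 2)) := by
          rw [hc, hd]
      _ = 4 * (((2 * (k : ℝ) + 1) * (catalan k : ℝ)) * (((k : ℝ) + 1) * P)) := by ring
      _ = 4 ^ (k + 1) := by rw [ih]; ring

private lemma integral_one_sub_sq_pow (n : ℕ) :
    ∫ x in (-1 : ℝ)..1, (1 - x ^ 2) ^ n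
      = 2 * ∏ i ∈ Finset.range n, (2 * (i : ℝ) + 2) / (2 * (i : ℝ) + 3) := by
  have hsub := intervalIntegral.integral_comp_smul_deriv (a := (0 : ℝ)) (b := π)
    (f := Real.cos) (f' := fun x => -Real.sin x) (g := fun u : ℝ => (1 - u ^ 2) ^ n)
    (fun x _ => by simpa using Real.hasDerivAt_cos x)
    (Real.continuous_sin.neg.continuousOn)
    (((continuous_const.sub (continuous_pow 2)).pow n))
  simp only [Function.comp, Real.cos_zero, Real.cos_pi] at hsub
  have h2 : (∫ x in (0 : ℝ)..π, (-Real.sin x) • ((1 - Real.cos x ^ 2) ^ n))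
      = - ∫ x in (0 : ℝ)..π, Real.sin x ^ (2 * n + 1) := by
    rw [← intervalIntegral.integral_neg]
    apply intervalIntegral.integral_congr
    intro x _
    have hx : Real.sin x ^ (2 * n + 1) = (1 - Real.cos x ^ 2) ^ n * Real.sin x := by
      rw [← Real.sin_sq x, ← pow_mul, pow_succ]
    show (-Real.sin x) • (1 - Real.cos x ^ 2) ^ n = -Real.sin x ^ (2 * n + 1)
    rw [smul_eq_mul, hx]; ring
  have h3 : (∫ u in (1 : ℝ)..(-1), (1 - u ^ 2) ^ n) = - ∫ u in (-1 : ℝ)..1, (1 - u ^ 2) ^ n :=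
    intervalIntegral.integral_symm _ _
  rw [h3, h2] at hsub
  have h4 := integral_sin_pow_odd (n := n)
  linarith [hsub, h4]

/-- For `|z| < 1`, integral representations of `g₀(z)` and `g₁(z)`:
`∑_{n=0}^∞ 4^n z^n/((2n+1)·C_n) = (1/2)·∫_{-1}^1 dx/(1-z(1-x²))²` and
`∑_{n=0}^∞ 4^n n z^n/((2n+1)·C_n) = z·∫_{-1}^1 (1-x²)/(1-z(1-x²))³ dx`. -/
theorem g_zero_one_integral_rep (z : ℝ) (hz : |z| < 1) :
    (∑' n : ℕ, 4 ^ n * z ^ n / ((2 * (n : ℝ) + 1) * (catalan n : ℝ))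
        = 1 / 2 * ∫ x in (-1 : ℝ)..1, 1 / (1 - z * (1 - x ^ 2)) ^ 2)
    ∧ ∑' n : ℕ, 4 ^ n * (n : ℝ) * z ^ n / ((2 * (n : ℝ) + 1) * (catalan n : ℝ))
        = z * ∫ x in (-1 : ℝ)..1, (1 - x ^ 2) / (1 - z * (1 - x ^ 2)) ^ 3 := by
  have hzn : ‖|z|‖ < 1 := by rwa [Real.norm_eq_abs, abs_abs]
  have hr : ∀ x ∈ Set.Icc (-1 : ℝ) 1, ‖z * (1 - x ^ 2)‖ ≤ |z| := by
    intro x hx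
    have h1 : x ^ 2 ≤ 1 := by nlinarith [hx.1, hx.2]
    have h2 : (0 : ℝ) ≤ 1 - x ^ 2 := by linarith
    rw [Real.norm_eq_abs, abs_mul, abs_of_nonneg h2]
    nlinarith [abs_nonneg z]
  have hr' : ∀ x ∈ Set.Ioc (-1 : ℝ) 1, ‖z * (1 - x ^ 2)‖ < 1 := fun x hx =>
    lt_of_le_of_lt (hr x (Set.Ioc_subset_Icc_self hx)) hz
  have hcat : ∀ n : ℕ, ((2 * (n : ℝ) + 1) * (catalan n : ℝ)) ≠ 0 := by
    intro n
    have hcb := n.centralBinom_pos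
    rw [← succ_mul_catalan_eq_centralBinom] at hcb
    have hpos : 0 < catalan n := Nat.pos_of_ne_zero (by intro h0; simp [h0] at hcb)
    have : (0 : ℝ) < (catalan n : ℝ) := by exact_mod_cast hpos
    positivity
  have hIoc : ∀ f : ℝ → ℝ, Continuous f → IntegrableOn f (Set.Ioc (-1 : ℝ) 1) := by
    intro f hf
    exact (hf.integrableOn_Icc).mono_set Set.Ioc_subset_Icc_self
  have hbound : ∀ (g : ℝ → ℝ) (C : ℝ), IntegrableOn g (Set.Ioc (-1 : ℝ) 1) →
      (∀ x ∈ Set.Ioc (-1 : ℝ) 1, ‖g x‖ ≤ C) →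
      ∫ x in Set.Ioc (-1 : ℝ) 1, ‖g x‖ ≤ 2 * C := by
    intro g C hg hb
    calc ∫ x in Set.Ioc (-1 : ℝ) 1, ‖g x‖ ≤ ∫ _x in Set.Ioc (-1 : ℝ) 1, C :=
          MeasureTheory.setIntegral_mono_on hg.norm
            (integrableOn_const (by simp)) measurableSet_Ioc hb
      _ = 2 * C := by
          rw [MeasureTheory.setIntegral_const, Real.volume_real_Ioc]
          norm_num [smul_eq_mul]
  constructor
  · -- Part 1
    set f : ℕ → ℝ → ℝ := fun n x => (((n : ℝ) + 1) / 2) * (z * (1 - x ^ 2)) ^ n with hf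
    have hint : ∀ n, IntegrableOn (f n) (Set.Ioc (-1 : ℝ) 1) := by
      intro n
      exact hIoc _ (by fun_prop)
    have hnormle : ∀ n x, x ∈ Set.Ioc (-1 : ℝ) 1 → ‖f n x‖ ≤ (((n : ℝ) + 1) / 2) * |z| ^ n := by
      intro n x hx
      have := hr x (Set.Ioc_subset_Icc_self hx)
      rw [hf]
      rw [Real.norm_eq_abs, abs_mul, abs_pow, abs_of_nonneg (by positivity : (0:ℝ) ≤ ((n:ℝ)+1)/2)]
      exact mul_le_mul_of_nonneg_left
        (pow_le_pow_left₀ (abs_nonneg _) (by rw [← Real.norm_eq_abs]; exact this) n)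
        (by positivity)
    have hsumC : Summable (fun n : ℕ => ((n : ℝ) + 1) * |z| ^ n) := by
      have := (hasSum_choose_mul_geometric_of_norm_lt_one (𝕜 := ℝ) 1 hzn).summable
      simpa [Nat.choose_one_right] using this
    have hsumnorm : Summable fun n => ∫ x in Set.Ioc (-1 : ℝ) 1, ‖f n x‖ := by
      apply Summable.of_nonneg_of_le
        (fun n => integral_nonneg (fun x => norm_nonneg _))
        (fun n => le_trans (hbound (f n) _ (hint n) (hnormle n)) (by ring_nf; exact le_refl _))
        hsumC
    have hswap := MeasureTheory.integral_tsum_of_summable_integral_norm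
      (μ := volume.restrict (Set.Ioc (-1 : ℝ) 1)) (F := f) hint hsumnorm
    have hterm : ∀ n, (∫ x in Set.Ioc (-1 : ℝ) 1, f n x)
        = 4 ^ n * z ^ n / ((2 * (n : ℝ) + 1) * (catalan n : ℝ)) := by
      intro n
      rw [← intervalIntegral.integral_of_le (by norm_num : (-1 : ℝ) ≤ 1)]
      have heq : (fun x : ℝ => f n x)
          = fun x => ((((n : ℝ) + 1) / 2) * z ^ n) * (1 - x ^ 2) ^ n := by
        funext x; rw [hf]; simp only [mul_pow]; ring
      rw [heq, intervalIntegral.integral_const_mul, integral_one_sub_sq_pow]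
      rw [eq_div_iff (hcat n)]
      linear_combination z ^ n * cat_prod n
    have hpt : ∀ x ∈ Set.Ioc (-1 : ℝ) 1,
        (∑' n, f n x) = 1 / 2 * (1 / (1 - z * (1 - x ^ 2)) ^ 2) := by
      intro x hx
      have hx1 := hr' x hx
      have h := (hasSum_choose_mul_geometric_of_norm_lt_one (𝕜 := ℝ) 1 hx1).mul_left (1 / 2)
      have heq : (fun n : ℕ => (1 / 2 : ℝ) * (((n + 1).choose 1 : ℝ) * (z * (1 - x ^ 2)) ^ n))
          = fun n => f n x := by
        funext n; rw [hf]; simp only [Nat.choose_one_right]; push_cast; ring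
      rw [heq] at h
      exact h.tsum_eq.trans (by norm_num)
    calc ∑' n : ℕ, 4 ^ n * z ^ n / ((2 * (n : ℝ) + 1) * (catalan n : ℝ))
        = ∑' n : ℕ, ∫ x in Set.Ioc (-1 : ℝ) 1, f n x := by
          exact tsum_congr fun n => (hterm n).symm
      _ = ∫ x in Set.Ioc (-1 : ℝ) 1, ∑' n, f n x := hswap
      _ = ∫ x in Set.Ioc (-1 : ℝ) 1, 1 / 2 * (1 / (1 - z * (1 - x ^ 2)) ^ 2) :=
          MeasureTheory.setIntegral_congr_fun measurableSet_Ioc hpt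
      _ = 1 / 2 * ∫ x in Set.Ioc (-1 : ℝ) 1, 1 / (1 - z * (1 - x ^ 2)) ^ 2 :=
          MeasureTheory.integral_const_mul _ _
      _ = 1 / 2 * ∫ x in (-1 : ℝ)..1, 1 / (1 - z * (1 - x ^ 2)) ^ 2 := by
          rw [intervalIntegral.integral_of_le (by norm_num : (-1 : ℝ) ≤ 1)]
  · -- Part 2
    set f : ℕ → ℝ → ℝ := fun n x => ((n : ℝ) * ((n : ℝ) + 1) / 2) * (z * (1 - x ^ 2)) ^ n with hf
    have hint : ∀ n, IntegrableOn (f n) (Set.Ioc (-1 : ℝ) 1) := by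
      intro n
      exact hIoc _ (by fun_prop)
    have hnormle : ∀ n x, x ∈ Set.Ioc (-1 : ℝ) 1 →
        ‖f n x‖ ≤ ((n : ℝ) * ((n : ℝ) + 1) / 2) * |z| ^ n := by
      intro n x hx
      have := hr x (Set.Ioc_subset_Icc_self hx)
      rw [hf]
      rw [Real.norm_eq_abs, abs_mul, abs_pow,
        abs_of_nonneg (by positivity : (0:ℝ) ≤ (n:ℝ) * ((n:ℝ)+1) / 2)]
      exact mul_le_mul_of_nonneg_left
        (pow_le_pow_left₀ (abs_nonneg _) (by rw [← Real.norm_eq_abs]; exact this) n)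
        (by positivity)
    have hsumC : Summable (fun n : ℕ => (n : ℝ) * ((n : ℝ) + 1) * |z| ^ n) := by
      have s2 := summable_pow_mul_geometric_of_norm_lt_one (R := ℝ) 2 hzn
      have s1 := summable_pow_mul_geometric_of_norm_lt_one (R := ℝ) 1 hzn
      have hadd := s2.add s1
      have heq : (fun n : ℕ => (n : ℝ) ^ 2 * |z| ^ n + (n : ℝ) ^ 1 * |z| ^ n)
          = fun n : ℕ => (n : ℝ) * ((n : ℝ) + 1) * |z| ^ n := by funext n; ring
      rwa [heq] at hadd
    have hsumnorm : Summable fun n => ∫ x in Set.Ioc (-1 : ℝ) 1, ‖f n x‖ := by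
      apply Summable.of_nonneg_of_le
        (fun n => integral_nonneg (fun x => norm_nonneg _))
        (fun n => le_trans (hbound (f n) _ (hint n) (hnormle n)) (by ring_nf; exact le_refl _))
        hsumC
    have hswap := MeasureTheory.integral_tsum_of_summable_integral_norm
      (μ := volume.restrict (Set.Ioc (-1 : ℝ) 1)) (F := f) hint hsumnorm
    have hterm : ∀ n, (∫ x in Set.Ioc (-1 : ℝ) 1, f n x)
        = 4 ^ n * (n : ℝ) * z ^ n / ((2 * (n : ℝ) + 1) * (catalan n : ℝ)) := by
      intro n
      rw [← intervalIntegral.integral_of_le (by norm_num : (-1 : ℝ) ≤ 1)]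
      have heq : (fun x : ℝ => f n x)
          = fun x => (((n : ℝ) * ((n : ℝ) + 1) / 2) * z ^ n) * (1 - x ^ 2) ^ n := by
        funext x; rw [hf]; simp only [mul_pow]; ring
      rw [heq, intervalIntegral.integral_const_mul, integral_one_sub_sq_pow]
      rw [eq_div_iff (hcat n)]
      linear_combination (n : ℝ) * z ^ n * cat_prod n
    have hpt : ∀ x ∈ Set.Ioc (-1 : ℝ) 1,
        (∑' n, f n x) = z * ((1 - x ^ 2) / (1 - z * (1 - x ^ 2)) ^ 3) := by
      intro x hx
      have hx1 := hr' x hx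
      set r : ℝ := z * (1 - x ^ 2) with hrdef
      have h := (hasSum_choose_mul_geometric_of_norm_lt_one (𝕜 := ℝ) 2 hx1).mul_left r
      have heq : (fun n : ℕ => r * (((n + 2).choose 2 : ℝ) * r ^ n))
          = fun n : ℕ => f (n + 1) x := by
        funext n
        rw [hf, Nat.cast_choose_two]
        push_cast
        ring
      rw [heq] at h
      have h2 := (hasSum_nat_add_iff (f := fun n => f n x) 1).mp h
      have hzero : ∑ i ∈ Finset.range 1, f i x = 0 := by
        simp [hf]
      rw [hzero, add_zero] at h2
      rw [h2.tsum_eq]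
      have hpow : (1 / (1 - r) ^ (2 + 1) : ℝ) = 1 / (1 - r) ^ 3 := by norm_num
      rw [hpow]
      ring
    calc ∑' n : ℕ, 4 ^ n * (n : ℝ) * z ^ n / ((2 * (n : ℝ) + 1) * (catalan n : ℝ))
        = ∑' n : ℕ, ∫ x in Set.Ioc (-1 : ℝ) 1, f n x := by
          exact tsum_congr fun n => (hterm n).symm
      _ = ∫ x in Set.Ioc (-1 : ℝ) 1, ∑' n, f n x := hswap
      _ = ∫ x in Set.Ioc (-1 : ℝ) 1, z * ((1 - x ^ 2) / (1 - z * (1 - x ^ 2)) ^ 3) :=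
          MeasureTheory.setIntegral_congr_fun measurableSet_Ioc hpt
      _ = z * ∫ x in Set.Ioc (-1 : ℝ) 1, (1 - x ^ 2) / (1 - z * (1 - x ^ 2)) ^ 3 :=
          MeasureTheory.integral_const_mul _ _
      _ = z * ∫ x in (-1 : ℝ)..1, (1 - x ^ 2) / (1 - z * (1 - x ^ 2)) ^ 3 := by
          rw [intervalIntegral.integral_of_le (by norm_num : (-1 : ℝ) ≤ 1)]
end

section
/- For every real number z with |z| < 4, ∑_{n=0}^∞ z^n / C_n = 1 + 2z·∫_0^1 (1−x)/(1 − z·x·(1−x))^3 dx. -/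
open MeasureTheory intervalIntegral Set

lemma beta_nat_s12 (a b : ℕ) :
    ∫ x in (0:ℝ)..1, x ^ a * (1 - x) ^ b
      = (a.factorial * b.factorial : ℝ) / (a + b + 1).factorial := by
  induction b generalizing a with
  | zero =>
      simp only [pow_zero, mul_one, integral_pow, one_pow, Nat.factorial_zero, Nat.cast_one,
        Nat.factorial_succ]
      push_cast
      have h1 : ((a:ℝ)+1) ≠ 0 := by positivity
      have h2 : (a.factorial : ℝ) ≠ 0 := by positivity
      rw [zero_pow (by omega)]
      field_simp
      norm_num
  | succ b ih =>
      have hu : ∀ x ∈ uIcc (0:ℝ) 1,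
          HasDerivAt (fun y : ℝ => (1 - y) ^ (b + 1)) (-((b + 1 : ℝ) * (1 - x) ^ b)) x := by
        intro x _
        have h := ((hasDerivAt_id x).const_sub 1).pow (b + 1)
        refine h.congr_deriv (Eq.symm ?_)
        simp only [id_eq]
        push_cast
        ring
      have hv : ∀ x ∈ uIcc (0:ℝ) 1,
          HasDerivAt (fun y : ℝ => y ^ (a + 1) / (a + 1 : ℝ)) (x ^ a) x := by
        intro x _
        have h := (hasDerivAt_pow (a + 1) x).div_const ((a : ℝ) + 1)
        refine h.congr_deriv (Eq.symm ?_)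
        have : ((a:ℝ)+1) ≠ 0 := by positivity
        field_simp
        rw [Nat.add_sub_cancel]
        push_cast
        ring
      have hIu : IntervalIntegrable (fun x : ℝ => -((b + 1 : ℝ) * (1 - x) ^ b)) volume 0 1 := by
        apply Continuous.intervalIntegrable; continuity
      have hIv : IntervalIntegrable (fun x : ℝ => x ^ a) volume 0 1 := by
        apply Continuous.intervalIntegrable; continuity
      have key := intervalIntegral.integral_mul_deriv_eq_deriv_mul hu hv hIu hIv
      have e1 : ∫ x in (0:ℝ)..1, x ^ a * (1 - x) ^ (b+1)
          = ∫ x in (0:ℝ)..1, (1 - x) ^ (b+1) * x ^ a := by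
        congr 1; funext x; ring
      rw [e1, key]
      simp only [one_pow, sub_self, zero_pow, sub_zero, zero_div, mul_zero, zero_mul]
      have e2 : ∫ x in (0:ℝ)..1, -((b + 1 : ℝ) * (1 - x) ^ b) * (x ^ (a+1) / (a+1:ℝ))
          = (-((b+1:ℝ)/(a+1:ℝ))) * ∫ x in (0:ℝ)..1, x ^ (a+1) * (1 - x) ^ b := by
        rw [← intervalIntegral.integral_const_mul]
        congr 1; funext x; field_simp
      rw [e2, ih (a+1)]
      have h1 : ((a:ℝ)+1) ≠ 0 := by positivity
      have hf : ∀ m : ℕ, (m.factorial : ℝ) ≠ 0 := fun m => by positivity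
      have idx : a + 1 + b + 1 = a + (b + 1) + 1 := by omega
      rw [idx]
      rw [Nat.factorial_succ (a), Nat.factorial_succ b]
      push_cast
      field_simp
      ring


lemma catalan_fact (n : ℕ) :
    (n + 1) * catalan n * ((2 * n + 1) * (n.factorial * n.factorial)) = (n + n + 1).factorial := by
  have h1 : (n + 1) * catalan n = n.centralBinom := succ_mul_catalan_eq_centralBinom n
  have h2 : (2 * n).choose n * n.factorial * n.factorial = (2 * n).factorial := by
    have := Nat.choose_mul_factorial_mul_factorial (show n ≤ 2 * n by omega)
    simpa [show 2 * n - n = n by omega] using this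
  have h3 : (n + n + 1).factorial = (2 * n + 1) * (2 * n).factorial := by
    rw [show n + n + 1 = (2 * n) + 1 by omega, Nat.factorial_succ]
  rw [h1, Nat.centralBinom, h3, ← h2]
  ring

lemma hasSum_aux {t : ℝ} (ht : |t| < 1) :
    HasSum (fun n : ℕ => ((n:ℝ) + 1) * (2 * n + 1) * t ^ n) ((1 + 3 * t) / (1 - t) ^ 3) := by
  have ht' : ‖t‖ < 1 := by rwa [Real.norm_eq_abs]
  have h2 := hasSum_choose_mul_geometric_of_norm_lt_one 2 ht'
  have h1 := hasSum_choose_mul_geometric_of_norm_lt_one 1 ht'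
  have h := (h2.mul_left 4).sub (h1.mul_left 3)
  have hne : (1:ℝ) - t ≠ 0 := by
    have := abs_lt.mp ht; intro h0; linarith [this.2]
  convert h using 1
  · rfl
  · funext n
    have hc : ((n + 2).choose 2) * 2 = (n + 1) * (n + 2) := by
      have hd : 2 ∣ (n + 2) * (n + 1) := by
        rcases Nat.even_mul_succ_self (n + 1) with ⟨k, hk⟩
        have hk' : (n + 2) * (n + 1) = k + k := by rw [show (n+2)*(n+1) = (n+1)*(n+1+1) by ring]; exact hk
        exact ⟨k, by omega⟩
      rw [Nat.choose_two_right, show n + 2 - 1 = n + 1 from rfl, Nat.div_mul_cancel hd]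
      ring
    have hc1 : (n + 1).choose 1 = n + 1 := Nat.choose_one_right _
    have hcR : ((n + 2).choose 2 : ℝ) * 2 = ((n:ℝ) + 1) * ((n:ℝ) + 2) := by
      exact_mod_cast congrArg (Nat.cast : ℕ → ℝ) hc
    rw [hc1]
    push_cast
    linear_combination (-2 * t ^ n) * hcR
  · field_simp
    ring


lemma denom_bound (z : ℝ) {x : ℝ} (hx : x ∈ Set.Icc (0:ℝ) 1) :
    |z * x * (1 - x)| ≤ |z| / 4 := by
  obtain ⟨h0, h1⟩ := hx
  rw [abs_mul, abs_mul, abs_of_nonneg h0, abs_of_nonneg (by linarith : (0:ℝ) ≤ 1 - x)]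
  nlinarith [abs_nonneg z, sq_nonneg (x - 1/2)]

lemma denom_lt (z : ℝ) (hz : |z| < 4) {x : ℝ} (hx : x ∈ Set.Icc (0:ℝ) 1) :
    |z * x * (1 - x)| < 1 :=
  lt_of_le_of_lt (denom_bound z hx) (by linarith)

lemma denom_pos (z : ℝ) (hz : |z| < 4) {x : ℝ} (hx : x ∈ Set.Icc (0:ℝ) 1) :
    0 < 1 - z * x * (1 - x) := by
  have := abs_lt.mp (denom_lt z hz hx)
  linarith [this.2]

lemma ftc_aux (z : ℝ) (hz : |z| < 4) :
    ∫ x in (0:ℝ)..1, ((1 + 3 * (z * x * (1 - x))) - 2 * z * (1 - x)) / (1 - z * x * (1 - x)) ^ 3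
      = 1 := by
  have hpos : ∀ x ∈ Set.Icc (0:ℝ) 1, 0 < 1 - z * x * (1 - x) := fun x hx => denom_pos z hz hx
  have hder : ∀ x ∈ uIcc (0:ℝ) 1,
      HasDerivAt (fun y => (y - 1) / (1 - z * y * (1 - y)) ^ 2)
        (((1 + 3 * (z * x * (1 - x))) - 2 * z * (1 - x)) / (1 - z * x * (1 - x)) ^ 3) x := by
    intro x hx
    rw [uIcc_of_le zero_le_one] at hx
    have hne : 1 - z * x * (1 - x) ≠ 0 := ne_of_gt (hpos x hx)
    have hw : HasDerivAt (fun y : ℝ => 1 - z * y * (1 - y)) (-(z * (1 - 2 * x))) x := by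
      have h := (((hasDerivAt_id x).const_mul z).mul ((hasDerivAt_id x).const_sub 1)).const_sub 1
      refine h.congr_deriv (Eq.symm ?_)
      simp only [id_eq]
      ring
    have hw2 : HasDerivAt (fun y : ℝ => (1 - z * y * (1 - y)) ^ 2)
        (2 * (1 - z * x * (1 - x)) * (-(z * (1 - 2 * x)))) x := by
      have h := hw.pow 2
      refine h.congr_deriv (Eq.symm ?_)
      push_cast
      ring
    have hu : HasDerivAt (fun y : ℝ => y - 1) 1 x := (hasDerivAt_id x).sub_const 1
    have h := hu.div hw2 (pow_ne_zero 2 hne)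
    refine h.congr_deriv (Eq.symm ?_)
    field_simp
    ring
  have hint : IntervalIntegrable
      (fun x => ((1 + 3 * (z * x * (1 - x))) - 2 * z * (1 - x)) / (1 - z * x * (1 - x)) ^ 3)
      volume 0 1 := by
    apply ContinuousOn.intervalIntegrable
    rw [uIcc_of_le zero_le_one]
    apply ContinuousOn.div
    · fun_prop
    · fun_prop
    · exact fun x hx => pow_ne_zero 3 (ne_of_gt (hpos x hx))
  rw [intervalIntegral.integral_eq_sub_of_hasDerivAt hder hint]
  norm_num


/-- For `|z| < 4`,
`∑_{n=0}^∞ z^n/C_n = 1 + 2z·∫_0^1 (1-x)/(1-z·x·(1-x))³ dx`. -/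
theorem reciprocal_catalan_integral_rep (z : ℝ) (hz : |z| < 4) :
    ∑' n : ℕ, z ^ n / (catalan n : ℝ)
      = 1 + 2 * z * ∫ x in (0 : ℝ)..1, (1 - x) / (1 - z * x * (1 - x)) ^ 3 := by
  set F : ℕ → ℝ → ℝ := fun n x => ((n:ℝ) + 1) * (2 * n + 1) * (z * x * (1 - x)) ^ n with hF
  set μ : Measure ℝ := volume.restrict (Ioc 0 1) with hμ
  -- each term integral
  have hL : ∀ n : ℕ, ∫ x, F n x ∂μ = z ^ n / catalan n := by
    intro n
    have h0 : ∫ x, F n x ∂μ = ∫ x in (0:ℝ)..1, F n x :=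
      (intervalIntegral.integral_of_le zero_le_one).symm
    have h1 : ∀ x : ℝ, F n x = (((n:ℝ) + 1) * (2 * n + 1) * z ^ n) * (x ^ n * (1 - x) ^ n) := by
      intro x; simp only [hF, mul_pow]; ring
    rw [h0]
    rw [show (fun x => F n x) = fun x => (((n:ℝ) + 1) * (2 * n + 1) * z ^ n) * (x ^ n * (1 - x) ^ n)
      from funext h1]
    rw [intervalIntegral.integral_const_mul, beta_nat_s12 n n]
    have hcat : (catalan n : ℝ) ≠ 0 := by
      have hp : 0 < catalan n := by
        by_contra h
        have h0 : catalan n = 0 := by omega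
        have h1 := succ_mul_catalan_eq_centralBinom n
        have h2 := n.centralBinom_pos
        rw [h0, mul_zero] at h1
        omega
      exact Nat.cast_ne_zero.mpr hp.ne'
    have hfac : ((n + n + 1).factorial : ℝ) ≠ 0 := by positivity
    have key : ((n:ℝ) + 1) * (catalan n) * ((2 * n + 1) * ((n.factorial : ℝ) * n.factorial))
        = ((n + n + 1).factorial : ℝ) := by exact_mod_cast congrArg Nat.cast (catalan_fact n)
    field_simp
    linear_combination (z ^ n) * key
  -- integrability
  have hFint : ∀ n : ℕ, Integrable (F n) μ := by
    intro n
    have : Continuous (F n) := by fun_prop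
    exact (this.integrableOn_Ioc : IntegrableOn (F n) (Ioc 0 1) volume)
  -- bound on norm integrals
  have hbound : ∀ n : ℕ, ∫ x, ‖F n x‖ ∂μ ≤ ((n:ℝ) + 1) * (2 * n + 1) * (|z| / 4) ^ n := by
    intro n
    have hptw : ∀ x ∈ Ioc (0:ℝ) 1, ‖F n x‖ ≤ ((n:ℝ) + 1) * (2 * n + 1) * (|z| / 4) ^ n := by
      intro x hx
      have hx' : x ∈ Set.Icc (0:ℝ) 1 := Ioc_subset_Icc_self hx
      have : ‖F n x‖ = ((n:ℝ) + 1) * (2 * n + 1) * |z * x * (1 - x)| ^ n := by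
        rw [Real.norm_eq_abs, hF]
        rw [abs_mul, abs_pow, abs_mul]
        rw [abs_of_nonneg (by positivity : (0:ℝ) ≤ (n:ℝ) + 1),
          abs_of_nonneg (by positivity : (0:ℝ) ≤ 2 * (n:ℝ) + 1)]
      rw [this]
      exact mul_le_mul_of_nonneg_left
        (pow_le_pow_left₀ (abs_nonneg _) (denom_bound z hx') n) (by positivity)
    calc ∫ x, ‖F n x‖ ∂μ ≤ ∫ _x, ((n:ℝ) + 1) * (2 * n + 1) * (|z| / 4) ^ n ∂μ := by
          apply setIntegral_mono_on (hFint n).norm ((integrableOn_const_iff).mpr (Or.inr ?_))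
            measurableSet_Ioc hptw
          simp [Real.volume_Ioc]
      _ = ((n:ℝ) + 1) * (2 * n + 1) * (|z| / 4) ^ n := by
          simp [hμ, Real.volume_Ioc]
  have hr : ‖|z| / 4‖ < 1 := by
    rw [Real.norm_eq_abs, abs_of_nonneg (by positivity)]
    linarith
  have hbs : Summable fun n : ℕ => ((n:ℝ) + 1) * (2 * n + 1) * (|z| / 4) ^ n := by
    have s2 := summable_pow_mul_geometric_of_norm_lt_one (R := ℝ) 2 hr
    have s1 := summable_pow_mul_geometric_of_norm_lt_one (R := ℝ) 1 hr
    have s0 := summable_geometric_of_norm_lt_one hr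
    refine (((s2.mul_left 2).add (s1.mul_left 3)).add s0).congr fun n => ?_
    push_cast
    ring
  have hsum : Summable fun n : ℕ => ∫ x, ‖F n x‖ ∂μ :=
    Summable.of_nonneg_of_le (fun n => integral_nonneg fun x => norm_nonneg _) hbound hbs
  have swap := MeasureTheory.hasSum_integral_of_summable_integral_norm hFint hsum
  have hstep1 : ∑' n : ℕ, z ^ n / (catalan n : ℝ) = ∫ x, (∑' n, F n x) ∂μ := by
    rw [← swap.tsum_eq]
    exact tsum_congr fun n => (hL n).symm
  have hstep2 : ∫ x, (∑' n, F n x) ∂μ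
      = ∫ x in Ioc (0:ℝ) 1, (1 + 3 * (z * x * (1 - x))) / (1 - z * x * (1 - x)) ^ 3 := by
    apply setIntegral_congr_fun measurableSet_Ioc
    intro x hx
    exact (hasSum_aux (denom_lt z hz (Ioc_subset_Icc_self hx))).tsum_eq
  have hstep3 : ∫ x in Ioc (0:ℝ) 1, (1 + 3 * (z * x * (1 - x))) / (1 - z * x * (1 - x)) ^ 3
      = ∫ x in (0:ℝ)..1, (1 + 3 * (z * x * (1 - x))) / (1 - z * x * (1 - x)) ^ 3 :=
    (intervalIntegral.integral_of_le zero_le_one).symm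
  -- split
  have hpos : ∀ x ∈ Set.Icc (0:ℝ) 1, 0 < 1 - z * x * (1 - x) := fun x hx => denom_pos z hz hx
  have hsplit : ∀ x : ℝ, (1 + 3 * (z * x * (1 - x))) / (1 - z * x * (1 - x)) ^ 3
      = ((1 + 3 * (z * x * (1 - x))) - 2 * z * (1 - x)) / (1 - z * x * (1 - x)) ^ 3
        + 2 * z * ((1 - x) / (1 - z * x * (1 - x)) ^ 3) := by
    intro x
    rw [← mul_div_assoc, ← add_div]
    congr 1
    ring
  have hi1 : IntervalIntegrable
      (fun x => ((1 + 3 * (z * x * (1 - x))) - 2 * z * (1 - x)) / (1 - z * x * (1 - x)) ^ 3)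
      volume 0 1 := by
    apply ContinuousOn.intervalIntegrable
    rw [uIcc_of_le zero_le_one]
    exact ContinuousOn.div (by fun_prop) (by fun_prop)
      fun x hx => pow_ne_zero 3 (ne_of_gt (hpos x hx))
  have hi2 : IntervalIntegrable
      (fun x => 2 * z * ((1 - x) / (1 - z * x * (1 - x)) ^ 3)) volume 0 1 := by
    apply ContinuousOn.intervalIntegrable
    rw [uIcc_of_le zero_le_one]
    exact ContinuousOn.mul continuousOn_const
      (ContinuousOn.div (by fun_prop) (by fun_prop)
        fun x hx => pow_ne_zero 3 (ne_of_gt (hpos x hx)))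
  have hstep4 : ∫ x in (0:ℝ)..1, (1 + 3 * (z * x * (1 - x))) / (1 - z * x * (1 - x)) ^ 3
      = 1 + 2 * z * ∫ x in (0:ℝ)..1, (1 - x) / (1 - z * x * (1 - x)) ^ 3 := by
    rw [show (fun x => (1 + 3 * (z * x * (1 - x))) / (1 - z * x * (1 - x)) ^ 3)
        = fun x => ((1 + 3 * (z * x * (1 - x))) - 2 * z * (1 - x)) / (1 - z * x * (1 - x)) ^ 3
          + 2 * z * ((1 - x) / (1 - z * x * (1 - x)) ^ 3) from funext hsplit]
    rw [intervalIntegral.integral_add hi1 hi2, ftc_aux z hz,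
      intervalIntegral.integral_const_mul]
  rw [hstep1, hstep2, hstep3, hstep4]
end

section
/- Define real polynomials P_{1,m} and P_{2,m} by P_{1,0} = P_{2,0} = 1/2 and, for m ≥ 1, P_{1,m}(z) = z(1−z)·P'_{1,m−1}(z) + m·z·P_{1,m−1}(z) + (1/2)·P_{2,m−1}(z) and P_{2,m}(z) = z(1−z)·P'_{2,m−1}(z) + (m+1)·z·P_{2,m−1}(z) − (1/2)·P_{2,m−1}(z). Then for every integer m ≥ 0 the polynomials P_{1,m} and P_{2,m} have degree m, and for every real z with 0 < z < 1, ∑_{n=0}^∞ 4^n n^m z^n/((2n+1)·C_n) = P_{1,m}(z)/(1−z)^{m+1} + (P_{2,m}(z)/(1−z)^{m+2}) · arctan(√(z/(1−z))) / √(z/(1−z)). -/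
open Polynomial Filter Topology Set

/-! Write `g_m(z) = ∑ aₙ n^m zⁿ` with `aₙ = 4ⁿ / ((2n+1) Cₙ)`, and `R_m` for the right-hand side.
Then `g_{m+1} = z g_m'`, and the recursion defining `P_{1,m}, P_{2,m}` is exactly what makes
`R_{m+1} = z R_m'` (using `2z(1-z) A' = 1 - z - A` for `A = arctan √w / √w`, `w = z/(1-z)`), so
everything reduces to `m = 0`. There the coefficient recurrence `(2n+3) a_{n+1} = (2n+4) aₙ`
telescopes to `2z(1-z) g₀' + (1-4z) g₀ = 1`, and `R₀` satisfies the same equation. The difference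
`D` solves the homogeneous equation, so `z(1-z)³D²` is constant on `(0,1)`; it tends to `0` at
`0⁺` because `D` stays bounded there, hence `D = 0`. The degrees follow from the leading
coefficients `1/2` and `2^m/2`. -/

/-- The pair of polynomials `(P_{1,m}, P_{2,m})` defined by
`P_{1,0} = P_{2,0} = 1/2` and, for `m ≥ 1`,
`P_{1,m}(z) = z(1-z)·P'_{1,m-1}(z) + m·z·P_{1,m-1}(z) + (1/2)·P_{2,m-1}(z)`,
`P_{2,m}(z) = z(1-z)·P'_{2,m-1}(z) + (m+1)·z·P_{2,m-1}(z) - (1/2)·P_{2,m-1}(z)`. -/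
noncomputable def catalanP : ℕ → Polynomial ℝ × Polynomial ℝ
  | 0 => (C (1 / 2), C (1 / 2))
  | m + 1 =>
      (X * (1 - X) * derivative (catalanP m).1
        + C ((m : ℝ) + 1) * X * (catalanP m).1
        + C (1 / 2) * (catalanP m).2,
       X * (1 - X) * derivative (catalanP m).2
        + C ((m : ℝ) + 2) * X * (catalanP m).2
        - C (1 / 2) * (catalanP m).2)

section Degree

variable {R : Type*} [CommRing R]

noncomputable def catalanStep (c : R) (p : R[X]) : R[X] :=
  X * (1 - X) * derivative p + C c * X * p

theorem coeff_catalanStep_succ (c : R) (p : R[X]) (k : ℕ) :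
    (catalanStep c p).coeff (k + 1) = (k + 1) * p.coeff (k + 1) + (c - k) * p.coeff k := by
  have h : catalanStep c p = X * derivative p - X * (X * derivative p) + C c * (X * p) := by
    rw [catalanStep]; ring
  rcases k with _ | k
  · simp [h, coeff_derivative]
  · simp only [h, coeff_add, coeff_sub, coeff_X_mul, coeff_C_mul, coeff_derivative]
    push_cast
    ring

theorem natDegree_catalanStep_le (c : R) {p : R[X]} {m : ℕ} (hp : p.natDegree ≤ m) :
    (catalanStep c p).natDegree ≤ m + 1 := by
  refine natDegree_le_iff_coeff_eq_zero.2 fun k hk => ?_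
  obtain ⟨j, rfl⟩ : ∃ j, k = j + 1 := ⟨k - 1, by omega⟩
  rw [coeff_catalanStep_succ, coeff_eq_zero_of_natDegree_lt (by omega),
    coeff_eq_zero_of_natDegree_lt (by omega : p.natDegree < j)]
  ring

end Degree

theorem catalanP_succ (m : ℕ) :
    catalanP (m + 1) =
      (catalanStep ((m : ℝ) + 1) (catalanP m).1 + C (1 / 2) * (catalanP m).2,
       catalanStep ((m : ℝ) + 2) (catalanP m).2 - C (1 / 2) * (catalanP m).2) := rfl

theorem catalanP_natDegree_le_and_coeff (m : ℕ) :
    (catalanP m).1.natDegree ≤ m ∧ (catalanP m).2.natDegree ≤ m ∧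
      (catalanP m).1.coeff m = 1 / 2 ∧ (catalanP m).2.coeff m = 2 ^ m / 2 := by
  induction m with
  | zero => simp [catalanP]
  | succ m ih =>
    obtain ⟨hdeg₁, hdeg₂, hcoeff₁, hcoeff₂⟩ := ih
    have hC : (C (1 / 2 : ℝ) * (catalanP m).2).natDegree ≤ m + 1 :=
      (natDegree_C_mul_le _ _).trans (by omega)
    have hvanish₁ : (catalanP m).1.coeff (m + 1) = 0 := coeff_eq_zero_of_natDegree_lt (by omega)
    have hvanish₂ : (catalanP m).2.coeff (m + 1) = 0 := coeff_eq_zero_of_natDegree_lt (by omega)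
    simp only [catalanP_succ, coeff_add, coeff_sub, coeff_C_mul, coeff_catalanStep_succ,
      hvanish₁, hvanish₂, hcoeff₁, hcoeff₂]
    refine ⟨natDegree_add_le_of_degree_le (natDegree_catalanStep_le _ hdeg₁) hC,
      (natDegree_sub_le _ _).trans (max_le (natDegree_catalanStep_le _ hdeg₂) hC), by ring,
      by ring⟩

theorem catalanP_degree (m : ℕ) :
    (catalanP m).1.degree = m ∧ (catalanP m).2.degree = m := by
  obtain ⟨hdeg₁, hdeg₂, hcoeff₁, hcoeff₂⟩ := catalanP_natDegree_le_and_coeff m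
  exact ⟨degree_eq_of_le_of_coeff_ne_zero (degree_le_of_natDegree_le hdeg₁) (by simp [hcoeff₁]),
    degree_eq_of_le_of_coeff_ne_zero (degree_le_of_natDegree_le hdeg₂) (by simp [hcoeff₂])⟩

theorem summable_succ_pow_mul_geometric (k : ℕ) {r : ℝ} (hr : |r| < 1) :
    Summable fun n : ℕ => ((n : ℝ) + 1) ^ k * r ^ n := by
  have hbinom (n : ℕ) : ((n : ℝ) + 1) ^ k * r ^ n =
      ∑ i ∈ Finset.range (k + 1), (k.choose i : ℝ) * ((n : ℝ) ^ i * r ^ n) := by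
    rw [add_pow, Finset.sum_mul]
    exact Finset.sum_congr rfl fun i _ => by ring
  simp_rw [hbinom]
  exact summable_sum fun i _ =>
    (summable_pow_mul_geometric_of_norm_lt_one i (r := r) hr).mul_left _

section PowerSeries

variable {c : ℕ → ℝ} {k : ℕ}

theorem summable_mul_pow_of_abs_le (hc : ∀ n, |c n| ≤ ((n : ℝ) + 1) ^ k) {z : ℝ} (hz : |z| < 1) :
    Summable fun n => c n * z ^ n := by
  refine .of_norm_bounded (summable_succ_pow_mul_geometric k (by rwa [abs_abs])) fun n => ?_
  rw [Real.norm_eq_abs, abs_mul, abs_pow]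
  exact mul_le_mul_of_nonneg_right (hc n) (by positivity)

theorem hasDerivAt_tsum_mul_pow (hc : ∀ n, |c n| ≤ ((n : ℝ) + 1) ^ k) {z : ℝ} (hz : |z| < 1) :
    HasDerivAt (fun y => ∑' n, c n * y ^ n) (∑' n, c n * (n * z ^ (n - 1))) z := by
  obtain ⟨r, hzr, hr⟩ := exists_between hz
  have hr₀ : 0 < r := (abs_nonneg z).trans_lt hzr
  -- at `n = 0` this is `1 ≤ 1 / r`
  have hpow (n : ℕ) : r ^ (n - 1) ≤ r ^ n / r := by
    rcases n with _ | n
    · simpa using one_le_inv_iff₀.2 ⟨hr₀, hr.le⟩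
    · rw [Nat.add_sub_cancel, pow_succ, mul_div_cancel_right₀ _ hr₀.ne']
  refine hasDerivAt_tsum_of_isPreconnected
    ((summable_succ_pow_mul_geometric (k + 1) (by rwa [abs_of_pos hr₀])).div_const r)
    Metric.isOpen_ball (convex_ball 0 r).isPreconnected
    (fun n y _ => (hasDerivAt_pow n y).const_mul (c n)) (fun n y hy => ?_)
    (Metric.mem_ball_self hr₀) (summable_mul_pow_of_abs_le hc (by simp)) (by simpa using hzr)
  rw [mem_ball_zero_iff, Real.norm_eq_abs] at hy
  rw [Real.norm_eq_abs, abs_mul, abs_mul, abs_pow, Nat.abs_cast, pow_succ, mul_div_assoc,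
    mul_assoc]
  gcongr
  · exact hc n
  · linarith
  · exact (pow_le_pow_left₀ (abs_nonneg y) hy.le _).trans (hpow n)

end PowerSeries

theorem catalan_pos (n : ℕ) : 0 < catalan n :=
  Nat.pos_of_mul_pos_left ((succ_mul_catalan_eq_centralBinom n).symm ▸ n.centralBinom_pos)

theorem succ_succ_mul_catalan_succ (n : ℕ) :
    (n + 2) * catalan (n + 1) = 2 * (2 * n + 1) * catalan n := by
  refine Nat.eq_of_mul_eq_mul_left n.succ_pos ?_
  calc (n + 1) * ((n + 2) * catalan (n + 1)) = (n + 1) * (n + 1).centralBinom := by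
        rw [← succ_mul_catalan_eq_centralBinom (n + 1)]
    _ = 2 * (2 * n + 1) * n.centralBinom := Nat.succ_mul_centralBinom_succ n
    _ = (n + 1) * (2 * (2 * n + 1) * catalan n) := by
        rw [← succ_mul_catalan_eq_centralBinom n]; ring

noncomputable def gCoeff (n : ℕ) : ℝ := 4 ^ n / ((2 * n + 1) * catalan n)

theorem gCoeff_zero : gCoeff 0 = 1 := by simp [gCoeff]

theorem gCoeff_pos (n : ℕ) : 0 < gCoeff n := by
  have := catalan_pos n
  unfold gCoeff
  positivity

theorem gCoeff_succ (n : ℕ) : (2 * (n : ℝ) + 3) * gCoeff (n + 1) = (2 * n + 4) * gCoeff n := by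
  have hrec : ((n : ℝ) + 2) * catalan (n + 1) = 2 * (2 * n + 1) * catalan n := by
    exact_mod_cast succ_succ_mul_catalan_succ n
  have := catalan_pos n
  have := catalan_pos (n + 1)
  rw [gCoeff, gCoeff, mul_div_assoc', mul_div_assoc',
    div_eq_div_iff (by positivity) (by positivity)]
  push_cast
  linear_combination (-(2 * (n : ℝ) + 3) * 2 * 4 ^ n) * hrec

theorem gCoeff_le (n : ℕ) : gCoeff n ≤ n + 1 := by
  induction n with
  | zero => simp [gCoeff_zero]
  | succ n ih =>
    have h := gCoeff_succ n
    push_cast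
    nlinarith [gCoeff_pos n]

noncomputable def gSeries (m : ℕ) (z : ℝ) : ℝ := ∑' n, gCoeff n * n ^ m * z ^ n

theorem abs_gCoeff_mul_pow_le (m n : ℕ) : |gCoeff n * n ^ m| ≤ ((n : ℝ) + 1) ^ (m + 1) := by
  rw [abs_of_nonneg (by have := gCoeff_pos n; positivity), pow_succ']
  gcongr
  · exact gCoeff_le n
  · linarith

theorem summable_gSeries (m : ℕ) {z : ℝ} (hz : |z| < 1) :
    Summable fun n => gCoeff n * n ^ m * z ^ n :=
  summable_mul_pow_of_abs_le (abs_gCoeff_mul_pow_le m) hz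

theorem continuousAt_gSeries (m : ℕ) {z : ℝ} (hz : |z| < 1) : ContinuousAt (gSeries m) z :=
  (hasDerivAt_tsum_mul_pow (abs_gCoeff_mul_pow_le m) hz).continuousAt

theorem hasDerivAt_gSeries (m : ℕ) {z : ℝ} (hz₀ : z ≠ 0) (hz : |z| < 1) :
    HasDerivAt (gSeries m) (gSeries (m + 1) z / z) z := by
  refine (hasDerivAt_tsum_mul_pow (abs_gCoeff_mul_pow_le m) hz).congr_deriv ?_
  rw [eq_div_iff hz₀, gSeries, ← tsum_mul_right]
  refine tsum_congr fun n => ?_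
  rcases n with _ | n
  · simp
  · rw [Nat.add_sub_cancel]
    ring

theorem gSeries_ode {z : ℝ} (hz : |z| < 1) :
    2 * (1 - z) * gSeries 1 z + (1 - 4 * z) * gSeries 0 z = 1 := by
  set b : ℕ → ℝ := fun n => (2 * n + 1) * gCoeff n * z ^ n
  have hb : HasSum b (∑' n, b n) :=
    ((((summable_gSeries 1 hz).mul_left 2).add (summable_gSeries 0 hz)).congr
      fun n => by simp only [b]; ring).hasSum
  have htelescope : HasSum (fun n => b n - b (n + 1)) 1 := by
    simpa [b, gCoeff_zero] using hb.sub ((hasSum_nat_add_iff' 1).2 hb)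
  refine (((summable_gSeries 1 hz).hasSum.mul_left (2 * (1 - z))).add
    ((summable_gSeries 0 hz).hasSum.mul_left (1 - 4 * z))).unique
    (htelescope.congr_fun fun n => ?_)
  simp only [b]
  push_cast
  linear_combination z ^ (n + 1) * gCoeff_succ n

theorem Real.arctan_le_self {x : ℝ} (hx : 0 ≤ x) : Real.arctan x ≤ x := by
  simpa using Real.le_tan (Real.arctan_nonneg.2 hx) (Real.arctan_lt_pi_div_two x)

noncomputable def arctanSqrtRatio (z : ℝ) : ℝ := Real.arctan √(z / (1 - z)) / √(z / (1 - z))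

theorem arctanSqrtRatio_mem_Icc (z : ℝ) : arctanSqrtRatio z ∈ Icc 0 1 := by
  have hs := Real.sqrt_nonneg (z / (1 - z))
  exact ⟨div_nonneg (Real.arctan_nonneg.2 hs) hs, div_le_one_of_le₀ (Real.arctan_le_self hs) hs⟩

theorem hasDerivAt_arctanSqrtRatio {z : ℝ} (hz₀ : 0 < z) (hz₁ : z < 1) :
    HasDerivAt arctanSqrtRatio ((1 - z - arctanSqrtRatio z) / (2 * z * (1 - z))) z := by
  have hz₁' : 1 - z ≠ 0 := (sub_pos.2 hz₁).ne'
  have hw : HasDerivAt (fun y => y / (1 - y)) (1 / (1 - z) ^ 2) z :=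
    ((hasDerivAt_id' z).div ((hasDerivAt_id' z).const_sub 1) hz₁').congr_deriv (by ring)
  have hwpos : 0 < z / (1 - z) := div_pos hz₀ (sub_pos.2 hz₁)
  have hs := (Real.hasDerivAt_sqrt hwpos.ne').comp z hw
  have hspos : 0 < √(z / (1 - z)) := Real.sqrt_pos.2 hwpos
  refine (((Real.hasDerivAt_arctan _).comp z hs).div hs hspos.ne').congr_deriv ?_
  have hsq : √(z / (1 - z)) ^ 2 = z / (1 - z) := Real.sq_sqrt hwpos.le
  simp only [arctanSqrtRatio, Function.comp_apply]
  generalize √(z / (1 - z)) = s at hsq hspos ⊢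
  field_simp
  rw [hsq]
  field_simp
  ring

noncomputable def catalanClosedForm (m : ℕ) (z : ℝ) : ℝ :=
  (catalanP m).1.eval z / (1 - z) ^ (m + 1)
    + (catalanP m).2.eval z / (1 - z) ^ (m + 2) * arctanSqrtRatio z

theorem hasDerivAt_catalanClosedForm (m : ℕ) {z : ℝ} (hz₀ : 0 < z) (hz₁ : z < 1) :
    HasDerivAt (catalanClosedForm m) (catalanClosedForm (m + 1) z / z) z := by
  have hz₁' : 1 - z ≠ 0 := (sub_pos.2 hz₁).ne'
  have hpow (k : ℕ) : HasDerivAt (fun y => (1 - y) ^ (k + 1)) (-((k + 1) * (1 - z) ^ k)) z := by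
    simpa using ((hasDerivAt_id' z).const_sub 1).fun_pow (k + 1)
  have h := (((catalanP m).1.hasDerivAt z).div (hpow m) (pow_ne_zero _ hz₁')).add
    ((((catalanP m).2.hasDerivAt z).div (hpow (m + 1)) (pow_ne_zero _ hz₁')).mul
      (hasDerivAt_arctanSqrtRatio hz₀ hz₁))
  refine h.congr_deriv ?_
  simp only [catalanClosedForm, catalanP, eval_add, eval_sub, eval_mul, eval_X, eval_C, eval_one,
    Pi.div_apply, pow_succ]
  push_cast
  have hw : (1 - z) ^ m ≠ 0 := pow_ne_zero _ hz₁'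
  generalize (1 - z) ^ m = w at hw ⊢
  field_simp
  ring

theorem catalanClosedForm_ode {z : ℝ} (hz : z ≠ 1) :
    2 * (1 - z) * catalanClosedForm 1 z + (1 - 4 * z) * catalanClosedForm 0 z = 1 := by
  have hz' : 1 - z ≠ 0 := sub_ne_zero.2 hz.symm
  simp only [catalanClosedForm, catalanP, derivative_C, eval_add, eval_sub, eval_mul, eval_C,
    eval_X, eval_zero, mul_zero]
  push_cast
  field_simp
  ring

theorem abs_catalanClosedForm_zero_le {z : ℝ} (hz : z ≤ 1 / 2) :
    |catalanClosedForm 0 z| ≤ 3 := by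
  obtain ⟨hA₀, hA₁⟩ := arctanSqrtRatio_mem_Icc z
  have h₁ : 1 / 2 ≤ 1 - z := by linarith
  have h₂ : 1 / 4 ≤ (1 - z) ^ 2 := by nlinarith
  simp only [catalanClosedForm, catalanP, eval_C, zero_add, pow_one]
  rw [abs_of_nonneg (by positivity)]
  calc 1 / 2 / (1 - z) + 1 / 2 / (1 - z) ^ 2 * arctanSqrtRatio z
      ≤ 1 / 2 / (1 / 2) + 1 / 2 / (1 / 4) * 1 := by gcongr
    _ = 3 := by norm_num

theorem eqOn_zero_of_hasDerivAt_of_isBoundedUnder {D D' : ℝ → ℝ}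
    (hD : ∀ z ∈ Ioo (0 : ℝ) 1, HasDerivAt D (D' z) z)
    (hode : ∀ z ∈ Ioo (0 : ℝ) 1, 2 * z * (1 - z) * D' z + (1 - 4 * z) * D z = 0)
    (hbdd : IsBoundedUnder (· ≤ ·) (𝓝[>] 0) (norm ∘ D)) : EqOn D 0 (Ioo 0 1) := by
  -- `z * (1 - z) ^ 3` is the square of the integrating factor `√z * (1 - z) ^ (3 / 2)`.
  set G : ℝ → ℝ := fun z => z * (1 - z) ^ 3 * D z * D z
  have hG (z : ℝ) (hz : z ∈ Ioo (0 : ℝ) 1) : HasDerivAt G 0 z := by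
    refine ((((hasDerivAt_id' z).fun_mul (((hasDerivAt_id' z).const_sub 1).fun_pow 3)).fun_mul
      (hD z hz)).fun_mul (hD z hz)).congr_deriv ?_
    linear_combination (1 - z) ^ 2 * D z * hode z hz
  obtain ⟨a, ha⟩ := isOpen_Ioo.exists_is_const_of_deriv_eq_zero isPreconnected_Ioo
    (fun z hz => (hG z hz).differentiableAt.differentiableWithinAt) (fun z hz => (hG z hz).deriv)
  have hweight : Tendsto (fun z : ℝ => z * (1 - z) ^ 3) (𝓝[>] 0) (𝓝 0) :=
    tendsto_nhdsWithin_of_tendsto_nhds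
      ((by fun_prop : Continuous fun z : ℝ => z * (1 - z) ^ 3).tendsto' 0 0 (by norm_num))
  have hG₀ : Tendsto G (𝓝[>] 0) (𝓝 0) :=
    (hweight.zero_mul_isBoundedUnder_le hbdd).zero_mul_isBoundedUnder_le hbdd
  have ha₀ : a = 0 := by
    refine tendsto_nhds_unique (tendsto_const_nhds.congr' ?_) hG₀
    filter_upwards [Ioo_mem_nhdsGT one_pos] with z hz using (ha z hz).symm
  intro z hz
  have hweight₀ : z * (1 - z) ^ 3 ≠ 0 := by
    have := sub_pos.2 hz.2
    exact (mul_pos hz.1 (by positivity)).ne'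
  have hGz : G z = 0 := ha₀ ▸ ha z hz
  simpa [G, hweight₀] using hGz

theorem gSeries_zero_eqOn : EqOn (gSeries 0) (catalanClosedForm 0) (Ioo 0 1) := by
  have habs {z : ℝ} (hz : z ∈ Ioo (0 : ℝ) 1) : |z| < 1 := by rw [abs_of_pos hz.1]; exact hz.2
  have hbdd : IsBoundedUnder (· ≤ ·) (𝓝[>] 0) (norm ∘ (gSeries 0 - catalanClosedForm 0)) := by
    have hg : ∀ᶠ z in 𝓝[>] (0 : ℝ), ‖gSeries 0 z‖ ≤ ‖gSeries 0 0‖ + 1 :=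
      ((continuousAt_gSeries 0 (by simp)).norm.tendsto.mono_left
        nhdsWithin_le_nhds).eventually_le_const (lt_add_one _)
    have hR : ∀ᶠ z in 𝓝[>] (0 : ℝ), |catalanClosedForm 0 z| ≤ 3 := by
      filter_upwards [Ioo_mem_nhdsGT (by norm_num : (0 : ℝ) < 1 / 2)] with z hz
      exact abs_catalanClosedForm_zero_le hz.2.le
    refine isBoundedUnder_of_eventually_le (a := ‖gSeries 0 0‖ + 1 + 3) ?_
    filter_upwards [hg, hR] with z hg hR
    exact (norm_sub_le _ _).trans (add_le_add hg hR)
  intro z hz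
  refine sub_eq_zero.1 (eqOn_zero_of_hasDerivAt_of_isBoundedUnder
    (D' := fun z => (gSeries 1 z - catalanClosedForm 1 z) / z) (fun z hz => ?_) (fun z hz => ?_)
    hbdd hz)
  · exact ((hasDerivAt_gSeries 0 hz.1.ne' (habs hz)).sub
      (hasDerivAt_catalanClosedForm 0 hz.1 hz.2)).congr_deriv (sub_div _ _ _).symm
  · have hz₀ : z ≠ 0 := hz.1.ne'
    simp only [Pi.sub_apply]
    field_simp
    linear_combination gSeries_ode (habs hz) - catalanClosedForm_ode hz.2.ne

theorem gSeries_eqOn_catalanClosedForm (m : ℕ) :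
    EqOn (gSeries m) (catalanClosedForm m) (Ioo 0 1) := by
  induction m with
  | zero => exact gSeries_zero_eqOn
  | succ m ih =>
    intro z hz
    have habs : |z| < 1 := by rw [abs_of_pos hz.1]; exact hz.2
    have hderiv := (hasDerivAt_gSeries m hz.1.ne' habs).congr_of_eventuallyEq
      (ih.eventuallyEq_of_mem (isOpen_Ioo.mem_nhds hz)).symm
    exact (div_left_inj' hz.1.ne').1 (hderiv.unique (hasDerivAt_catalanClosedForm m hz.1 hz.2))

/-- Theorem 5 of the paper: `P_{1,m}` and `P_{2,m}` have degree `m`, and for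
`0 < z < 1`,
`∑_{n=0}^∞ 4^n n^m z^n/((2n+1)·C_n)
  = P_{1,m}(z)/(1-z)^{m+1} + (P_{2,m}(z)/(1-z)^{m+2})·arctan(√(z/(1-z)))/√(z/(1-z))`. -/
theorem g_m_closed_form (m : ℕ) :
    (catalanP m).1.degree = m ∧ (catalanP m).2.degree = m ∧
    ∀ z : ℝ, 0 < z → z < 1 →
      ∑' n : ℕ, 4 ^ n * (n : ℝ) ^ m * z ^ n / ((2 * (n : ℝ) + 1) * (catalan n : ℝ))
        = ((catalanP m).1.eval z) / (1 - z) ^ (m + 1)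
          + ((catalanP m).2.eval z) / (1 - z) ^ (m + 2)
            * (Real.arctan (Real.sqrt (z / (1 - z))) / Real.sqrt (z / (1 - z))) := by
  refine ⟨(catalanP_degree m).1, (catalanP_degree m).2, fun z hz₀ hz₁ => ?_⟩
  calc _ = gSeries m z := tsum_congr fun n => by rw [gCoeff]; ring
    _ = _ := gSeries_eqOn_catalanClosedForm m ⟨hz₀, hz₁⟩
end

section
/- Define real polynomials P_{1,m} and P_{2,m} by P_{1,0} = P_{2,0} = 1/2 and, for m ≥ 1, P_{1,m}(z) = z(1−z)·P'_{1,m−1}(z) + m·z·P_{1,m−1}(z) + (1/2)·P_{2,m−1}(z) and P_{2,m}(z) = z(1−z)·P'_{2,m−1}(z) + (m+1)·z·P_{2,m−1}(z) − (1/2)·P_{2,m−1}(z). Then for every integer m ≥ 0, P_{1,m}(z) = (1/2)·m!·z^m + ∑_{j=0}^{m−1} binom(m,j)·j!·z^j·( z(1−z)·P'_{1,m−(j+1)}(z) + (1/2)·P_{2,m−(j+1)}(z) ) and P_{2,m}(z) = (1/2)·∏_{j=1}^{m} ((j+1)z − 1/2) + z(1−z)·∑_{j=1}^{m} P'_{2,m−j}(z)·∏_{k=2}^{j}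 ((m+3−k)z − 1/2), where an empty product equals 1 and an empty sum equals 0. -/
open Polynomial

theorem catalanP_key (m : ℕ) (z : ℝ) :
    ((catalanP m).1.eval z
        = 1 / 2 * (Nat.factorial m) * z ^ m
          + ∑ j ∈ Finset.range m, (m.choose j : ℝ) * (Nat.factorial j) * z ^ j
              * (z * (1 - z) * (derivative (catalanP (m - (j + 1))).1).eval z
                + 1 / 2 * ((catalanP (m - (j + 1))).2.eval z)))
    ∧ (catalanP m).2.eval z
        = 1 / 2 * ∏ i ∈ Finset.range m, (((i : ℝ) + 2) * z - 1 / 2)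
          + z * (1 - z) * ∑ i ∈ Finset.range m,
              (derivative (catalanP (m - 1 - i)).2).eval z
                * ∏ k ∈ Finset.range i, (((m : ℝ) + 1 - (k : ℝ)) * z - 1 / 2) := by
  induction m with
  | zero => simp [catalanP]
  | succ m ih =>
    obtain ⟨ih1, ih2⟩ := ih
    have h1 : (catalanP (m + 1)).1 = X * (1 - X) * derivative (catalanP m).1
        + C ((m : ℝ) + 1) * X * (catalanP m).1 + C (1 / 2) * (catalanP m).2 := rfl
    have h2 : (catalanP (m + 1)).2 = X * (1 - X) * derivative (catalanP m).2
        + C ((m : ℝ) + 2) * X * (catalanP m).2 - C (1 / 2) * (catalanP m).2 := rfl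
    constructor
    · rw [h1]
      simp only [eval_add, eval_mul, eval_sub, eval_X, eval_one, eval_C]
      rw [ih1, Finset.sum_range_succ']
      have hterm : ∀ j ∈ Finset.range m,
          (((m + 1).choose (j + 1) : ℝ)) * (Nat.factorial (j + 1)) * z ^ (j + 1)
              * (z * (1 - z) * (derivative (catalanP (m + 1 - (j + 1 + 1))).1).eval z
                + 1 / 2 * ((catalanP (m + 1 - (j + 1 + 1))).2.eval z))
          = ((m : ℝ) + 1) * z * ((m.choose j : ℝ) * (Nat.factorial j) * z ^ j
              * (z * (1 - z) * (derivative (catalanP (m - (j + 1))).1).eval z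
                + 1 / 2 * ((catalanP (m - (j + 1))).2.eval z))) := by
        intro j hj
        have hidx : m + 1 - (j + 1 + 1) = m - (j + 1) := by omega
        have hc : ((m + 1).choose (j + 1) : ℝ) * (Nat.factorial (j + 1))
            = ((m : ℝ) + 1) * (m.choose j : ℝ) * (Nat.factorial j) := by
          have h : (m + 1).choose (j + 1) * Nat.factorial (j + 1)
              = (m + 1) * m.choose j * Nat.factorial j := by
            rw [Nat.factorial_succ, ← mul_assoc, ← Nat.add_one_mul_choose_eq]
          exact_mod_cast congrArg (Nat.cast (R := ℝ)) h
        rw [hidx, hc]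
        ring
      rw [Finset.sum_congr rfl hterm, ← Finset.mul_sum]
      simp only [Nat.add_sub_cancel, Nat.choose_zero_right, Nat.factorial_zero, pow_zero,
        Nat.factorial_succ]
      push_cast
      ring
    · rw [h2]
      simp only [eval_add, eval_mul, eval_sub, eval_X, eval_one, eval_C]
      rw [ih2, Finset.prod_range_succ, Finset.sum_range_succ']
      have hterm : ∀ i ∈ Finset.range m,
          (derivative (catalanP (m + 1 - 1 - (i + 1))).2).eval z
              * ∏ k ∈ Finset.range (i + 1), (((((m : ℕ) + 1 : ℕ) : ℝ) + 1 - (k : ℝ)) * z - 1 / 2)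
          = ((derivative (catalanP (m - 1 - i)).2).eval z
              * ∏ k ∈ Finset.range i, (((m : ℝ) + 1 - (k : ℝ)) * z - 1 / 2))
            * (((m : ℝ) + 2) * z - 1 / 2) := by
        intro i hi
        have hidx : m + 1 - 1 - (i + 1) = m - 1 - i := by omega
        rw [hidx, Finset.prod_range_succ']
        have hk : ∀ k ∈ Finset.range i,
            ((((m : ℕ) + 1 : ℕ) : ℝ) + 1 - ((k + 1 : ℕ) : ℝ)) * z - 1 / 2
            = ((m : ℝ) + 1 - (k : ℝ)) * z - 1 / 2 := by
          intro k _
          push_cast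
          ring
        rw [Finset.prod_congr rfl hk]
        push_cast
        ring
      rw [Finset.sum_congr rfl hterm, ← Finset.sum_mul]
      simp only [Nat.add_sub_cancel, Nat.sub_zero, Finset.prod_range_zero, mul_one]
      ring
  -- end

/-- Proposition 1 of the paper: explicit expressions for `P_{1,m}` and `P_{2,m}`. -/
theorem catalanP_explicit (m : ℕ) (z : ℝ) :
    ((catalanP m).1.eval z
        = 1 / 2 * (Nat.factorial m) * z ^ m
          + ∑ j ∈ Finset.range m, (m.choose j : ℝ) * (Nat.factorial j) * z ^ j
              * (z * (1 - z) * (derivative (catalanP (m - (j + 1))).1).eval z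
                + 1 / 2 * ((catalanP (m - (j + 1))).2.eval z)))
    ∧ (catalanP m).2.eval z
        = 1 / 2 * ∏ j ∈ Finset.Icc 1 m, (((j : ℝ) + 1) * z - 1 / 2)
          + z * (1 - z) * ∑ j ∈ Finset.Icc 1 m,
              (derivative (catalanP (m - j)).2).eval z
                * ∏ k ∈ Finset.Icc 2 j, (((m : ℝ) + 3 - (k : ℝ)) * z - 1 / 2) := by
  refine ⟨(catalanP_key m z).1, ?_⟩
  rw [(catalanP_key m z).2]
  congr 1
  · congr 1
    rw [← Finset.Ico_add_one_right_eq_Icc, Finset.prod_Ico_eq_prod_range]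

    refine Finset.prod_congr rfl fun i _ => ?_
    push_cast
    ring
  · congr 1
    rw [← Finset.Ico_add_one_right_eq_Icc, Finset.sum_Ico_eq_sum_range]

    refine Finset.sum_congr rfl fun i _ => ?_
    have hidx : m - (1 + i) = m - 1 - i := by omega
    rw [hidx]
    congr 1
    rw [← Finset.Ico_add_one_right_eq_Icc, Finset.prod_Ico_eq_prod_range]
    have h2 : 1 + i + 1 - 2 = i := by omega
    rw [h2]
    refine Finset.prod_congr rfl fun k _ => ?_
    push_cast
    ring
end

section
/- For all integers m ≥ 0 and n ≥ 0, ∑_{j=0}^{m} (−1)^j · S(m+1, m+1−j) · (n+m−j)! = n^m · n!, where S(n,k) denotes the Stirling numbers of the second kind. -/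
/-- The Stirling numbers of the second kind,
`S(n,k) = (1/k!)·∑_{s=0}^k (-1)^s·binom(k,s)·(k-s)^n` (with `0^0 = 1`). -/
def stirlingSecond (n k : ℕ) : ℚ :=
  1 / (Nat.factorial k : ℚ)
    * ∑ s ∈ Finset.range (k + 1), (-1) ^ s * (k.choose s : ℚ) * ((k - s : ℕ) : ℚ) ^ n

open Finset

/-- The numerator sum in the Stirling number formula. -/
def stirF (n k : ℕ) : ℚ :=
  ∑ s ∈ Finset.range (k + 1), (-1) ^ s * (k.choose s : ℚ) * ((k - s : ℕ) : ℚ) ^ n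

lemma stirlingSecond_eq_F (n k : ℕ) :
    stirlingSecond n k = stirF n k / (Nat.factorial k : ℚ) := by
  rw [stirlingSecond, stirF, one_div, inv_mul_eq_div]

lemma choose_key (k s : ℕ) (hs : s ≤ k + 1) :
    (k + 1) * Nat.choose k s = Nat.choose (k + 1) s * (k + 1 - s) := by
  rcases Nat.lt_or_ge s (k + 1) with h | h
  · have hsk : s ≤ k := Nat.lt_succ_iff.mp h
    have h1 := Nat.add_one_mul_choose_eq k (k - s)
    have h2 : Nat.choose k (k - s) = Nat.choose k s := Nat.choose_symm hsk
    have h3 : Nat.choose (k + 1) (k + 1 - s) = Nat.choose (k + 1) s :=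
      Nat.choose_symm (by omega)
    have h4 : k - s + 1 = k + 1 - s := by omega
    rw [h2, h4, h3] at h1
    exact h1
  · have hs' : s = k + 1 := by omega
    subst hs'
    simp [Nat.choose_succ_self]

lemma stirF_rec (n k : ℕ) :
    stirF (n + 1) (k + 1) = (k + 1) * (stirF n (k + 1) + stirF n k) := by
  have h1 : stirF (n + 1) (k + 1)
      = (k + 1 : ℚ) * ∑ s ∈ range (k + 2),
          (-1) ^ s * (k.choose s : ℚ) * ((k + 1 - s : ℕ) : ℚ) ^ n := by
    rw [stirF, Finset.mul_sum]
    refine Finset.sum_congr rfl fun s hs => ?_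
    have hs' : s ≤ k + 1 := Nat.lt_succ_iff.mp (mem_range.mp hs)
    have hnat := choose_key k s hs'
    have hq : ((k : ℚ) + 1) * (Nat.choose k s : ℚ)
        = (Nat.choose (k + 1) s : ℚ) * ((k + 1 - s : ℕ) : ℚ) := by
      exact_mod_cast congrArg (fun x : ℕ => (x : ℚ)) hnat
    rw [pow_succ']
    linear_combination (-((-1 : ℚ) ^ s * ((k + 1 - s : ℕ) : ℚ) ^ n)) * hq
  have h2 : ∑ s ∈ range (k + 2),
      (-1 : ℚ) ^ s * (k.choose s : ℚ) * ((k + 1 - s : ℕ) : ℚ) ^ n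
      = stirF n (k + 1) + stirF n k := by
    have main : ∀ s ∈ range (k + 1),
        (-1 : ℚ) ^ (s + 1) * (k.choose (s + 1) : ℚ) * ((k + 1 - (s + 1) : ℕ) : ℚ) ^ n
        = (-1 : ℚ) ^ (s + 1) * (((k + 1).choose (s + 1) : ℕ) : ℚ)
              * ((k + 1 - (s + 1) : ℕ) : ℚ) ^ n
          + (-1 : ℚ) ^ s * (k.choose s : ℚ) * ((k - s : ℕ) : ℚ) ^ n := by
      intro s hs
      have hq : (((k + 1).choose (s + 1) : ℕ) : ℚ)
          = (k.choose s : ℚ) + (k.choose (s + 1) : ℚ) := by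
        exact_mod_cast congrArg (fun x : ℕ => (x : ℚ)) (Nat.choose_succ_succ k s)
      have hsub : (k + 1 - (s + 1) : ℕ) = k - s := by omega
      rw [hsub]
      linear_combination ((-1 : ℚ) ^ s * ((k - s : ℕ) : ℚ) ^ n) * hq
    have eL : ∑ s ∈ range (k + 2),
        (-1 : ℚ) ^ s * (k.choose s : ℚ) * ((k + 1 - s : ℕ) : ℚ) ^ n
        = (∑ s ∈ range (k + 1),
            (-1 : ℚ) ^ (s + 1) * (k.choose (s + 1) : ℚ) * ((k + 1 - (s + 1) : ℕ) : ℚ) ^ n)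
          + (-1 : ℚ) ^ 0 * (k.choose 0 : ℚ) * ((k + 1 - 0 : ℕ) : ℚ) ^ n :=
      Finset.sum_range_succ' _ (k + 1)
    have eR : stirF n (k + 1)
        = (∑ s ∈ range (k + 1),
            (-1 : ℚ) ^ (s + 1) * (((k + 1).choose (s + 1) : ℕ) : ℚ)
              * ((k + 1 - (s + 1) : ℕ) : ℚ) ^ n)
          + (-1 : ℚ) ^ 0 * (((k + 1).choose 0 : ℕ) : ℚ) * ((k + 1 - 0 : ℕ) : ℚ) ^ n := by
      rw [stirF]
      exact Finset.sum_range_succ' _ (k + 1)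
    rw [eL, eR, Finset.sum_congr rfl main, Finset.sum_add_distrib, stirF]
    simp only [pow_zero, Nat.choose_zero_right, Nat.cast_one, one_mul, Nat.sub_zero]
    ring
  rw [h1, h2]

lemma stirlingSecond_rec (n k : ℕ) :
    stirlingSecond (n + 1) (k + 1)
      = (k + 1) * stirlingSecond n (k + 1) + stirlingSecond n k := by
  rw [stirlingSecond_eq_F, stirlingSecond_eq_F, stirlingSecond_eq_F, stirF_rec]
  have hk1 : ((k + 1).factorial : ℚ) ≠ 0 := by
    exact_mod_cast Nat.factorial_ne_zero (k + 1)
  have hk : (k.factorial : ℚ) ≠ 0 := by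
    exact_mod_cast Nat.factorial_ne_zero k
  rw [Nat.factorial_succ]
  field_simp
  push_cast
  ring

lemma stirlingSecond_of_lt : ∀ n k : ℕ, n < k → stirlingSecond n k = 0 := by
  intro n
  induction n with
  | zero =>
    intro k hk
    obtain ⟨k', rfl⟩ : ∃ k', k = k' + 1 := ⟨k - 1, by omega⟩
    rw [stirlingSecond]
    have h0 : (∑ s ∈ range (k' + 2), (-1 : ℚ) ^ s * ((k' + 1).choose s : ℚ)
        * ((k' + 1 - s : ℕ) : ℚ) ^ 0) = 0 := by
      simp only [pow_zero, mul_one]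
      have := Int.alternating_sum_range_choose_of_ne (n := k' + 1) (by omega)
      exact_mod_cast this
    rw [h0, mul_zero]
  | succ n ih =>
    intro k hk
    obtain ⟨k', rfl⟩ : ∃ k', k = k' + 1 := ⟨k - 1, by omega⟩
    rw [stirlingSecond_rec, ih (k' + 1) (by omega), ih k' (by omega)]
    ring

lemma stirlingSecond_zero_right (n : ℕ) : stirlingSecond (n + 1) 0 = 0 := by
  rw [stirlingSecond]
  simp

lemma stirlingSecond_one_one : stirlingSecond 1 1 = 1 := by
  rw [stirlingSecond]
  simp [Finset.sum_range_succ]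

/-- Reindexed version of the main sum. -/
lemma aux_U (m n : ℕ) :
    ∑ k ∈ Finset.range (m + 1),
        (-1 : ℚ) ^ (m - k) * stirlingSecond (m + 1) (k + 1) * (Nat.factorial (n + k) : ℚ)
      = (n : ℚ) ^ m * (Nat.factorial n : ℚ) := by
  induction m with
  | zero => simp [stirlingSecond_one_one]
  | succ m ih =>
    have key : ∑ k ∈ Finset.range (m + 2),
        (-1 : ℚ) ^ (m + 1 - k) * stirlingSecond (m + 2) (k + 1) * (Nat.factorial (n + k) : ℚ)
        = (n : ℚ) * ∑ k ∈ Finset.range (m + 1),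
            (-1 : ℚ) ^ (m - k) * stirlingSecond (m + 1) (k + 1) * (Nat.factorial (n + k) : ℚ) := by
      have split : ∀ k ∈ range (m + 2),
          (-1 : ℚ) ^ (m + 1 - k) * stirlingSecond (m + 2) (k + 1) * (Nat.factorial (n + k) : ℚ)
          = (-1 : ℚ) ^ (m + 1 - k) * ((k + 1) * stirlingSecond (m + 1) (k + 1))
              * (Nat.factorial (n + k) : ℚ)
            + (-1 : ℚ) ^ (m + 1 - k) * stirlingSecond (m + 1) k * (Nat.factorial (n + k) : ℚ) := by
        intro k hk
        rw [stirlingSecond_rec]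
        ring
      rw [Finset.sum_congr rfl split, Finset.sum_add_distrib]
      -- first sum: top term k = m+1 vanishes
      have hA : ∑ k ∈ range (m + 2),
          (-1 : ℚ) ^ (m + 1 - k) * ((k + 1) * stirlingSecond (m + 1) (k + 1))
            * (Nat.factorial (n + k) : ℚ)
          = ∑ k ∈ range (m + 1),
            (-1 : ℚ) ^ (m + 1 - k) * ((k + 1) * stirlingSecond (m + 1) (k + 1))
              * (Nat.factorial (n + k) : ℚ) := by
        rw [Finset.sum_range_succ, stirlingSecond_of_lt (m + 1) (m + 2) (by omega)]
        simp
      -- second sum: bottom term k = 0 vanishes; shift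
      have hB : ∑ k ∈ range (m + 2),
          (-1 : ℚ) ^ (m + 1 - k) * stirlingSecond (m + 1) k * (Nat.factorial (n + k) : ℚ)
          = ∑ k ∈ range (m + 1),
            (-1 : ℚ) ^ (m - k) * stirlingSecond (m + 1) (k + 1)
              * (Nat.factorial (n + k + 1) : ℚ) := by
        rw [Finset.sum_range_succ'
          (fun k => (-1 : ℚ) ^ (m + 1 - k) * stirlingSecond (m + 1) k * (Nat.factorial (n + k) : ℚ)) (m + 1)]
        rw [stirlingSecond_zero_right]
        simp only [mul_zero, zero_mul, mul_one, add_zero]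
        refine Finset.sum_congr rfl fun k hk => ?_
        have hk' : k ≤ m := Nat.lt_succ_iff.mp (mem_range.mp hk)
        have h1 : m + 1 - (k + 1) = m - k := by omega
        have h2 : n + (k + 1) = n + k + 1 := by omega
        rw [h1, h2]
      rw [hA, hB, ← Finset.sum_add_distrib, Finset.mul_sum]
      refine Finset.sum_congr rfl fun k hk => ?_
      have hk' : k ≤ m := Nat.lt_succ_iff.mp (mem_range.mp hk)
      have hsign : (-1 : ℚ) ^ (m + 1 - k) = -(-1 : ℚ) ^ (m - k) := by
        have : m + 1 - k = (m - k) + 1 := by omega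
        rw [this, pow_succ]
        ring
      have hfact : (Nat.factorial (n + k + 1) : ℚ)
          = ((n : ℚ) + (k : ℚ) + 1) * (Nat.factorial (n + k) : ℚ) := by
        rw [Nat.factorial_succ]
        push_cast
        ring
      rw [hsign, hfact]
      ring
    rw [key, ih, pow_succ]
    ring

/-- Lemma 3 of the paper: for all `m, n ≥ 0`,
`∑_{j=0}^m (-1)^j·S(m+1, m+1-j)·(n+m-j)! = n^m·n!`. -/
theorem stirling_factorial_sum (m n : ℕ) :
    ∑ j ∈ Finset.range (m + 1),
        (-1 : ℚ) ^ j * stirlingSecond (m + 1) (m + 1 - j) * (Nat.factorial (n + m - j) : ℚ)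
      = (n : ℚ) ^ m * (Nat.factorial n : ℚ) := by
  rw [← aux_U m n]
  rw [← Finset.sum_range_reflect]
  refine Finset.sum_congr rfl fun j hj => ?_
  have hj' : j ≤ m := Nat.lt_succ_iff.mp (Finset.mem_range.mp hj)
  have h0 : m + 1 - 1 - j = m - j := by omega
  have h1 : m + 1 - (m - j) = j + 1 := by omega
  have h2 : n + m - (m - j) = n + j := by omega
  rw [h0, h1, h2]
end

section
/- For every integer m ≥ 0 there exist rational numbers a and b such that ∑_{n=0}^∞ 2^n n^m / ((2n+1)·C_n) = a + b·π. -/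
open MeasureTheory intervalIntegral Real Polynomial
open scoped ENNReal NNReal


noncomputable def bb (n : ℕ) : ℝ := 2 ^ n / (Nat.centralBinom n)

lemma cb_pos (n : ℕ) : (0:ℝ) < (Nat.centralBinom n : ℝ) := by
  exact_mod_cast Nat.centralBinom_pos n

lemma bb_pos (n : ℕ) : 0 < bb n := div_pos (by positivity) (cb_pos n)

lemma bb_succ (n : ℕ) : bb (n+1) = bb n * ((n+1) / (2*n+1)) := by
  have h' : ((n:ℝ)+1) * (Nat.centralBinom (n+1) : ℝ) = 2 * (2*n+1) * Nat.centralBinom n := by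
    exact_mod_cast Nat.succ_mul_centralBinom_succ n
  have h0 := cb_pos n
  have h1 := cb_pos (n+1)
  unfold bb
  rw [div_mul_div_comm, div_eq_div_iff (by positivity) (by positivity)]
  push_cast
  linear_combination (-(2:ℝ)^n) * h'

lemma prodA (n : ℕ) :
    ((2*(n:ℝ)+1) * (Nat.centralBinom n : ℝ)) * ∏ i ∈ Finset.range n, (2*(i:ℝ)+2)/(2*(i:ℝ)+3)
      = 4 ^ n := by
  induction n with
  | zero => simp [Nat.centralBinom]
  | succ k ih =>
    have h' : ((k:ℝ)+1) * (Nat.centralBinom (k+1) : ℝ) = 2 * (2*k+1) * Nat.centralBinom k := by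
      exact_mod_cast Nat.succ_mul_centralBinom_succ k
    rw [Finset.prod_range_succ]
    push_cast
    have hk3 : (2*(k:ℝ)+3) ≠ 0 := by positivity
    have hkey : (2*((k:ℝ)+1)+1) * (Nat.centralBinom (k+1):ℝ) * ((2*(k:ℝ)+2)/(2*(k:ℝ)+3))
        = 4 * ((2*(k:ℝ)+1) * (Nat.centralBinom k : ℝ)) := by
      field_simp
      linear_combination (2*(2*(k:ℝ)+3)) * h'
    calc (2*((k:ℝ)+1)+1) * (Nat.centralBinom (k+1):ℝ)
          * ((∏ i ∈ Finset.range k, (2*(i:ℝ)+2)/(2*(i:ℝ)+3)) * ((2*(k:ℝ)+2)/(2*(k:ℝ)+3)))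
        = ((2*((k:ℝ)+1)+1) * (Nat.centralBinom (k+1):ℝ) * ((2*(k:ℝ)+2)/(2*(k:ℝ)+3)))
          * ∏ i ∈ Finset.range k, (2*(i:ℝ)+2)/(2*(i:ℝ)+3) := by ring
      _ = 4 * (((2*(k:ℝ)+1) * (Nat.centralBinom k : ℝ))
          * ∏ i ∈ Finset.range k, (2*(i:ℝ)+2)/(2*(i:ℝ)+3)) := by rw [hkey]; ring
      _ = 4 ^ (k+1) := by rw [ih]; ring

lemma bb_def (n : ℕ) : bb n = 2 ^ n / (Nat.centralBinom n) := rfl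


lemma ptwise (x : ℝ) :
    ∑' n : ℕ, (1/2:ℝ)^(n+1) * Real.sin x ^ (2*n+1)
      = Real.sin x / (1 + Real.cos x ^ 2) := by
  have hs2 : Real.sin x ^ 2 ≤ 1 := Real.sin_sq_le_one x
  have hs0 : 0 ≤ Real.sin x ^ 2 := sq_nonneg _
  have hterm : ∀ n : ℕ, (1/2:ℝ)^(n+1) * Real.sin x ^ (2*n+1)
      = (Real.sin x / 2) * (Real.sin x ^ 2 / 2)^n := by
    intro n
    have h3 : Real.sin x ^ (2*n+1) = (Real.sin x ^ 2)^n * Real.sin x := by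
      rw [pow_succ, pow_mul]
    rw [h3, div_pow]
    rw [div_pow]; field_simp; ring
  rw [tsum_congr hterm, tsum_mul_left, tsum_geometric_of_lt_one (by positivity) (by linarith)]
  have hc : 1 - Real.sin x ^ 2 / 2 = (1 + Real.cos x ^ 2) / 2 := by
    have := Real.sin_sq_add_cos_sq x; linarith
  rw [hc]
  have hpos : (0:ℝ) < 1 + Real.cos x ^ 2 := by positivity
  field_simp

lemma integralD : ∫ x in (0:ℝ)..π, Real.sin x / (1 + Real.cos x ^ 2) = π/2 := by
  have hderiv : ∀ x ∈ Set.uIcc (0:ℝ) π,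
      HasDerivAt (fun y => -Real.arctan (Real.cos y))
        (Real.sin x / (1 + Real.cos x ^ 2)) x := by
    intro x _
    have h1 : HasDerivAt Real.cos (-Real.sin x) x := Real.hasDerivAt_cos x
    have h2 : HasDerivAt Real.arctan (1/(1 + (Real.cos x)^2)) (Real.cos x) :=
      Real.hasDerivAt_arctan _
    have h3 := (h2.comp x h1).neg
    convert h3 using 1
    have hpos : (0:ℝ) < 1 + Real.cos x ^ 2 := by positivity
    · rfl
    · rfl
    · rfl
    · ring
  have hcont : IntervalIntegrable (fun x => Real.sin x / (1 + Real.cos x ^ 2)) volume 0 π := by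
    apply Continuous.intervalIntegrable
    exact Real.continuous_sin.div (by continuity) (fun x => by positivity)
  rw [integral_eq_sub_of_hasDerivAt hderiv hcont]
  simp [Real.arctan_one, Real.arctan_neg]
  ring

lemma swapBC :
    ∑' n : ℕ, ∫ x in Set.Ioc (0:ℝ) π, (1/2:ℝ)^(n+1) * Real.sin x ^ (2*n+1)
      = ∫ x in Set.Ioc (0:ℝ) π, Real.sin x / (1 + Real.cos x ^ 2) := by
  rw [← MeasureTheory.integral_tsum]
  · apply setIntegral_congr_fun measurableSet_Ioc
    intro x _
    exact ptwise x
  · intro i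
    exact Continuous.aestronglyMeasurable (by continuity)
  · have hb : ∀ n : ℕ, (∫⁻ a in Set.Ioc (0:ℝ) π, (‖(1/2:ℝ)^(n+1) * Real.sin a ^ (2*n+1)‖₊ : ℝ≥0∞))
        ≤ (2⁻¹ : ℝ≥0∞)^n * ENNReal.ofReal π := by
      intro n
      have hle : ∀ a : ℝ, (‖(1/2:ℝ)^(n+1) * Real.sin a ^ (2*n+1)‖₊ : ℝ≥0∞)
          ≤ (2⁻¹ : ℝ≥0∞)^n := by
        intro a
        have habs : |(1/2:ℝ)^(n+1) * Real.sin a ^ (2*n+1)| ≤ (1/2:ℝ)^n := by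
          rw [abs_mul, abs_pow, abs_pow]
          have h1 : |Real.sin a| ^ (2*n+1) ≤ 1 :=
            pow_le_one₀ (abs_nonneg _) (Real.abs_sin_le_one a)
          have h2 : |(1/2:ℝ)| = 1/2 := by norm_num
          rw [h2]
          calc (1/2:ℝ)^(n+1) * |Real.sin a| ^ (2*n+1) ≤ (1/2:ℝ)^(n+1) * 1 :=
                mul_le_mul_of_nonneg_left h1 (by positivity)
            _ ≤ (1/2:ℝ)^n := by rw [mul_one]; exact pow_le_pow_of_le_one (by norm_num) (by norm_num) (Nat.le_succ n)
        have : (‖(1/2:ℝ)^(n+1) * Real.sin a ^ (2*n+1)‖₊ : ℝ≥0∞)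
            = ENNReal.ofReal |(1/2:ℝ)^(n+1) * Real.sin a ^ (2*n+1)| :=
          Real.enorm_eq_ofReal_abs _
        rw [this]
        calc ENNReal.ofReal |(1/2:ℝ)^(n+1) * Real.sin a ^ (2*n+1)|
            ≤ ENNReal.ofReal ((1/2:ℝ)^n) := ENNReal.ofReal_le_ofReal habs
          _ = (2⁻¹ : ℝ≥0∞)^n := by
              rw [ENNReal.ofReal_pow (by norm_num)]
              congr 1
              rw [one_div, ENNReal.ofReal_inv_of_pos two_pos]
              simp
      calc (∫⁻ a in Set.Ioc (0:ℝ) π, (‖(1/2:ℝ)^(n+1) * Real.sin a ^ (2*n+1)‖₊ : ℝ≥0∞))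
          ≤ ∫⁻ _ in Set.Ioc (0:ℝ) π, (2⁻¹ : ℝ≥0∞)^n := lintegral_mono fun a => hle a
        _ = (2⁻¹ : ℝ≥0∞)^n * volume (Set.Ioc (0:ℝ) π) := by
            rw [MeasureTheory.setLIntegral_const]
        _ = (2⁻¹ : ℝ≥0∞)^n * ENNReal.ofReal π := by rw [Real.volume_Ioc, sub_zero]
    have hsum : ∑' n : ℕ, (2⁻¹ : ℝ≥0∞)^n * ENNReal.ofReal π < ⊤ := by
      rw [ENNReal.tsum_mul_right, ENNReal.tsum_geometric]
      exact ENNReal.mul_lt_top (by simp) ENNReal.ofReal_lt_top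
    exact ne_of_lt (lt_of_le_of_lt (ENNReal.tsum_le_tsum hb) hsum)


lemma valA (n : ℕ) :
    bb n / (2*(n:ℝ)+1) = ∫ x in Set.Ioc (0:ℝ) π, (1/2:ℝ)^(n+1) * Real.sin x ^ (2*n+1) := by
  have h1 : ∫ x in Set.Ioc (0:ℝ) π, (1/2:ℝ)^(n+1) * Real.sin x ^ (2*n+1)
      = (1/2:ℝ)^(n+1) * ∫ x in (0:ℝ)..π, Real.sin x ^ (2*n+1) := by
    rw [intervalIntegral.integral_of_le Real.pi_pos.le, MeasureTheory.integral_const_mul]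
  rw [h1, integral_sin_pow_odd]
  have h := prodA n
  have hpos : (0:ℝ) < (2*(n:ℝ)+1) * Nat.centralBinom n := mul_pos (by positivity) (cb_pos n)
  have hprod : ∏ i ∈ Finset.range n, (2*(i:ℝ)+2)/(2*(i:ℝ)+3)
      = 4^n / ((2*(n:ℝ)+1) * Nat.centralBinom n) := by
    rw [eq_div_iff hpos.ne']
    linarith [h]
  rw [hprod, bb_def]
  have h2 : ((1/2:ℝ))^n * 4^n = 2^n := by rw [← mul_pow]; norm_num
  have hcb := cb_pos n
  field_simp
  rw [show (4:ℝ) = 2*2 by norm_num, mul_pow]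
  simp only [one_div, inv_pow]; field_simp
  ring

lemma core : ∑' n : ℕ, bb n / (2*(n:ℝ)+1) = π / 2 := by
  rw [tsum_congr valA, swapBC, ← intervalIntegral.integral_of_le Real.pi_pos.le, integralD]


lemma exKey (P : Polynomial ℚ) :
    ∃ (q : Polynomial ℚ) (c : ℚ),
      (q.comp (X + 1)) * (X + 1) - q * (2 * X + 1) = P - C c := by
  generalize hd : P.natDegree = d
  induction d using Nat.strong_induction_on generalizing P with
  | _ d ih =>
    by_cases h0 : d = 0
    · subst h0
      refine ⟨0, P.coeff 0, ?_⟩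
      rw [eq_C_of_natDegree_eq_zero hd]
      simp
    · have hd1 : 1 ≤ d := Nat.one_le_iff_ne_zero.mpr h0
      set a : ℚ := -P.coeff d with ha
      set q₀ : Polynomial ℚ := C a * X ^ (d - 1) with hq₀
      have hL : (q₀.comp (X + 1)) * (X + 1) - q₀ * (2 * X + 1)
          = C a * (X + 1) ^ d - C (2*a) * X ^ d - C a * X ^ (d - 1) := by
      -- (C a (X+1)^{d-1})·(X+1) - C a X^{d-1}(2X+1)
        rw [hq₀, mul_comp, C_comp, X_pow_comp]
        have h1 : (X + 1 : Polynomial ℚ) ^ (d - 1) * (X + 1) = (X + 1) ^ d := by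
          rw [← pow_succ, Nat.sub_add_cancel hd1]
        have h2 : (X : Polynomial ℚ) ^ (d - 1) * X = X ^ d := by
          rw [← pow_succ, Nat.sub_add_cancel hd1]
        calc C a * (X + 1) ^ (d-1) * (X + 1) - C a * X ^ (d-1) * (2 * X + 1)
            = C a * ((X + 1) ^ (d-1) * (X + 1)) - C (2*a) * (X ^ (d-1) * X)
              - C a * X ^ (d-1) := by simp [C_mul, map_ofNat]; ring
          _ = _ := by rw [h1, h2]
      set R : Polynomial ℚ := P - ((q₀.comp (X + 1)) * (X + 1) - q₀ * (2 * X + 1)) with hR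
      have hRdeg : R.degree < (d : ℕ) := by
        rw [degree_lt_iff_coeff_zero]
        intro m hm
        rw [hR, coeff_sub, hL, coeff_sub, coeff_sub, coeff_C_mul, coeff_C_mul, coeff_C_mul,
          coeff_X_add_one_pow, coeff_X_pow, coeff_X_pow]
        rcases eq_or_lt_of_le hm with heq | hlt
        · subst heq
          simp only [Nat.choose_self, Nat.cast_one, ha]
          split_ifs <;> (first | ring1 | (exfalso; omega) | (exfalso; simp_all))
        · have hP0 : P.coeff m = 0 := coeff_eq_zero_of_natDegree_lt (by omega)
          have hch : d.choose m = 0 := Nat.choose_eq_zero_of_lt hlt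
          simp only [hP0, hch, Nat.cast_zero]
          split_ifs <;> (first | ring1 | (exfalso; omega) | (exfalso; simp_all))
      have hRnat : R.natDegree < d := by
        by_cases hRz : R = 0
        · rw [hRz, natDegree_zero]; omega
        · exact (natDegree_lt_iff_degree_lt hRz).mpr hRdeg
      obtain ⟨q₁, c, hq₁⟩ := ih R.natDegree hRnat R rfl
      refine ⟨q₀ + q₁, c, ?_⟩
      have : ((q₀ + q₁).comp (X + 1)) * (X + 1) - (q₀ + q₁) * (2 * X + 1)
          = ((q₀.comp (X + 1)) * (X + 1) - q₀ * (2 * X + 1))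
            + ((q₁.comp (X + 1)) * (X + 1) - q₁ * (2 * X + 1)) := by
        rw [add_comp]; ring
      rw [this, hq₁, hR]
      ring


lemma bb_le (n : ℕ) : bb n ≤ (3/2) * (2/3)^n := by
  induction n with
  | zero => rw [bb_def]; norm_num [Nat.centralBinom]
  | succ k ih =>
    rw [bb_succ]
    match k with
    | 0 =>
      rw [bb_def]
      norm_num [Nat.centralBinom]
    | k+1 =>
      have hr : (((k:ℝ)+1)+1) / (2*((k:ℝ)+1)+1) ≤ 2/3 := by
        rw [div_le_div_iff₀ (by positivity) (by norm_num)]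
        push_cast; linarith [Nat.cast_nonneg (α := ℝ) k]
      have hb := bb_pos (k+1)
      calc bb (k+1) * ((((k+1:ℕ):ℝ)+1) / (2*((k+1:ℕ):ℝ)+1))
          ≤ ((3/2) * (2/3)^(k+1)) * (2/3) := by
            apply mul_le_mul ih ?_ (by positivity) (by positivity)
            push_cast
            exact hr
        _ = (3/2) * (2/3)^(k+2) := by ring
lemma poly_bound (q : Polynomial ℚ) :
    ∃ M : ℝ, 0 ≤ M ∧ ∀ n : ℕ, |((q.eval (n:ℚ) : ℚ) : ℝ)| ≤ M * ((n:ℝ)+1)^(q.natDegree) := by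
  set d := q.natDegree
  refine ⟨∑ i ∈ Finset.range (d+1), |((q.coeff i : ℚ) : ℝ)|,
    Finset.sum_nonneg fun i _ => abs_nonneg _, fun n => ?_⟩
  have he : ((q.eval (n:ℚ) : ℚ) : ℝ) = ∑ i ∈ Finset.range (d+1), ((q.coeff i : ℚ) : ℝ) * (n:ℝ)^i := by
    rw [eval_eq_sum_range]
    push_cast
    rfl
  rw [he]
  calc |∑ i ∈ Finset.range (d+1), ((q.coeff i : ℚ) : ℝ) * (n:ℝ)^i|
      ≤ ∑ i ∈ Finset.range (d+1), |((q.coeff i : ℚ) : ℝ) * (n:ℝ)^i| :=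
        Finset.abs_sum_le_sum_abs _ _
    _ ≤ ∑ i ∈ Finset.range (d+1), |((q.coeff i : ℚ) : ℝ)| * ((n:ℝ)+1)^d := by
        apply Finset.sum_le_sum
        intro i hi
        rw [abs_mul]
        apply mul_le_mul_of_nonneg_left ?_ (abs_nonneg _)
        rw [abs_pow, Nat.abs_cast]
        calc (n:ℝ)^i ≤ ((n:ℝ)+1)^i := by
              apply pow_le_pow_left₀ (Nat.cast_nonneg n); linarith
          _ ≤ ((n:ℝ)+1)^d := by
              apply pow_le_pow_right₀ (by linarith [Nat.cast_nonneg (α := ℝ) n])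
              exact Nat.lt_succ_iff.mp (Finset.mem_range.mp hi)
    _ = (∑ i ∈ Finset.range (d+1), |((q.coeff i : ℚ) : ℝ)|) * ((n:ℝ)+1)^d := by
        rw [Finset.sum_mul]

lemma summable_abs_poly_bb (q : Polynomial ℚ) :
    Summable (fun n : ℕ => |((q.eval (n:ℚ) : ℚ) : ℝ)| * bb n) := by
  obtain ⟨M, hM0, hM⟩ := poly_bound q
  set d := q.natDegree
  have hgeo : Summable (fun n : ℕ => ((n:ℝ)+1)^d * (2/3:ℝ)^(n+1)) := by
    have h0 : Summable (fun n : ℕ => (n:ℝ)^d * (2/3:ℝ)^n) := by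
      have := summable_pow_mul_geometric_of_norm_lt_one (R := ℝ) d
        (r := (2/3:ℝ)) (by rw [Real.norm_eq_abs]; rw [abs_of_pos (by norm_num : (0:ℝ) < 2/3)]; norm_num)
      exact this
    have h1 := (summable_nat_add_iff 1).mpr h0
    apply h1.congr
    intro n
    push_cast
    ring
  have hcomp : Summable (fun n : ℕ => (M * (3/2) * (3/2)) * (((n:ℝ)+1)^d * (2/3:ℝ)^(n+1))) :=
    hgeo.mul_left _
  apply Summable.of_nonneg_of_le (fun n => mul_nonneg (abs_nonneg _) (bb_pos n).le) ?_ hcomp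
  intro n
  calc |((q.eval (n:ℚ) : ℚ) : ℝ)| * bb n
      ≤ (M * ((n:ℝ)+1)^d) * ((3/2) * (2/3)^n) :=
        mul_le_mul (hM n) (bb_le n) (bb_pos n).le (by positivity)
    _ = (M * (3/2) * (3/2)) * (((n:ℝ)+1)^d * (2/3:ℝ)^(n+1)) := by ring

lemma summable_poly_bb (q : Polynomial ℚ) :
    Summable (fun n : ℕ => ((q.eval (n:ℚ) : ℚ) : ℝ) * bb n) := by
  apply Summable.of_abs
  apply (summable_abs_poly_bb q).congr
  intro n
  rw [abs_mul, abs_of_nonneg (bb_pos n).le]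

lemma summable_poly_bb_div (q : Polynomial ℚ) :
    Summable (fun n : ℕ => ((q.eval (n:ℚ) : ℚ) : ℝ) * bb n / (2*(n:ℝ)+1)) := by
  apply Summable.of_abs
  apply Summable.of_nonneg_of_le (fun n => abs_nonneg _) ?_ (summable_abs_poly_bb q)
  intro n
  rw [abs_div, abs_mul, abs_of_nonneg (bb_pos n).le,
    abs_of_pos (show (0:ℝ) < 2*(n:ℝ)+1 by positivity)]
  rw [div_le_iff₀ (by positivity)]
  have h1 : (1:ℝ) ≤ 2*(n:ℝ)+1 := by linarith [Nat.cast_nonneg (α := ℝ) n]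
  nlinarith [abs_nonneg (((q.eval (n:ℚ) : ℚ) : ℝ)), (bb_pos n).le,
    mul_nonneg (abs_nonneg (((q.eval (n:ℚ) : ℚ) : ℝ))) (bb_pos n).le]


/-- Corollary 1 of the paper: for every `m ≥ 0` there exist rationals `a, b` with
`∑_{n=0}^∞ 2^n n^m/((2n+1)·C_n) = a + b·π`. -/
theorem g_m_at_half_rational_pi (m : ℕ) :
    ∃ a b : ℚ,
      ∑' n : ℕ, 2 ^ n * (n : ℝ) ^ m / ((2 * (n : ℝ) + 1) * (catalan n : ℝ))
        = (a : ℝ) + (b : ℝ) * Real.pi := by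
  set P : Polynomial ℚ := X ^ m * (X + 1) with hP
  obtain ⟨q, c, hqc⟩ := exKey P
  have hnum : ∀ x : ℚ, (q.eval (x+1)) * (x+1) - q.eval x * (2*x+1) = P.eval x - c := by
    intro x
    have h := congrArg (eval x) hqc
    simpa [eval_comp] using h
  have hnumR : ∀ n : ℕ, ((q.eval ((n:ℚ)+1) : ℚ) : ℝ) * ((n:ℝ)+1)
      - ((q.eval (n:ℚ) : ℚ) : ℝ) * (2*(n:ℝ)+1)
      = ((P.eval (n:ℚ) : ℚ) : ℝ) - (c:ℝ) := by
    intro n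
    have h := hnum (n:ℚ)
    have h2 := congrArg (fun y : ℚ => (y:ℝ)) h
    push_cast at h2
    convert h2 using 2 <;> push_cast <;> ring
  set g : ℕ → ℝ := fun n => ((q.eval (n:ℚ) : ℚ) : ℝ) * bb n with hg
  have tele : ∀ n : ℕ, g (n+1) - g n
      = ((P.eval (n:ℚ) : ℚ) : ℝ) * bb n / (2*(n:ℝ)+1) - (c:ℝ) * (bb n / (2*(n:ℝ)+1)) := by
    intro n
    have key := hnumR n
    have h21 : (2*(n:ℝ)+1) ≠ 0 := by positivity
    rw [hg]
    simp only []
    rw [bb_succ n]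
    have hc1 : (((n+1:ℕ):ℚ)) = (n:ℚ)+1 := by push_cast; ring
    rw [hc1]
    field_simp
    linear_combination (bb n) * key
  have sd : Summable (fun n : ℕ => bb n / (2*(n:ℝ)+1)) := by
    have := summable_poly_bb_div 1
    simpa using this
  have sP := summable_poly_bb_div P
  have stele : Summable (fun n : ℕ =>
      ((P.eval (n:ℚ) : ℚ) : ℝ) * bb n / (2*(n:ℝ)+1) - (c:ℝ) * (bb n / (2*(n:ℝ)+1))) :=
    sP.sub (sd.mul_left _)
  have stele' : Summable (fun n : ℕ => g (n+1) - g n) := stele.congr (fun n => (tele n).symm)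
  have gtend : Filter.Tendsto g Filter.atTop (nhds 0) := (summable_poly_bb q).tendsto_atTop_zero
  have hpart : ∀ N : ℕ, ∑ i ∈ Finset.range N, (g (i+1) - g i) = g N - g 0 :=
    fun N => Finset.sum_range_sub g N
  have h2 : Filter.Tendsto (fun N => ∑ i ∈ Finset.range N, (g (i+1) - g i))
      Filter.atTop (nhds (0 - g 0)) := by
    simp only [hpart]
    exact gtend.sub_const (g 0)
  have htsum_tele : ∑' n : ℕ, (g (n+1) - g n) = - g 0 := by
    have h3 := stele'.hasSum.tendsto_sum_nat
    have h4 : ∑' n : ℕ, (g (n+1) - g n) = 0 - g 0 := tendsto_nhds_unique h3 h2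
    rw [h4]; ring
  -- rewrite terms
  have hterm : ∀ n : ℕ, 2 ^ n * (n : ℝ) ^ m / ((2 * (n : ℝ) + 1) * (catalan n : ℝ))
      = (g (n+1) - g n) + (c:ℝ) * (bb n / (2*(n:ℝ)+1)) := by
    intro n
    rw [tele n]
    have hcat : ((n:ℝ)+1) * (catalan n : ℝ) = (Nat.centralBinom n : ℝ) := by
      exact_mod_cast succ_mul_catalan_eq_centralBinom n
    have hn1 : ((n:ℝ)+1) ≠ 0 := by positivity
    have hc2 : (catalan n : ℝ) = (Nat.centralBinom n : ℝ) / ((n:ℝ)+1) := by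
      rw [eq_div_iff hn1]; linarith [hcat]
    have hPe : ((P.eval (n:ℚ) : ℚ) : ℝ) = (n:ℝ)^m * ((n:ℝ)+1) := by
      rw [hP]; push_cast; simp
    rw [hc2, bb_def, hPe]
    have hcb := cb_pos n
    have h21 : (0:ℝ) < 2*(n:ℝ)+1 := by positivity
    field_simp
    ring
  rw [tsum_congr hterm]
  have sdc : Summable (fun n : ℕ => (c:ℝ) * (bb n / (2*(n:ℝ)+1))) := sd.mul_left _
  rw [Summable.tsum_add stele' sdc, htsum_tele, tsum_mul_left, core]
  refine ⟨-(q.eval 0), c/2, ?_⟩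
  have hb0 : bb 0 = 1 := by rw [bb_def]; norm_num [Nat.centralBinom]
  have hg0 : g 0 = ((q.eval 0 : ℚ) : ℝ) := by
    rw [hg]; simp [hb0]
  rw [hg0]
  push_cast
  ring
end
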